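/- arXiv:2411.14227 — 8 statements merged into one kernel-verified Lean document; each statement's English description precedes it below -/
import Mathlib

section
/- Let $Q=(x_{i_1}^{\alpha_1},\ldots,x_{i_r}^{\alpha_r})$ be an ideal of $R=K[x_1,\ldots,x_n]$ generated by pure powers of distinct variables, with each $\alpha_j \ge 1$. Then for all integers $k > s$ with $s \le r$, the colon ideal $(Q^k : \prod_{j=1}^{s} x_{i_j}^{\alpha_j})$ equals $Q^{k-s}$. -/
/-!
For a monomial `x^m` put `pureOrder ι α m = ∑ⱼ ⌊m (ι j) / α j⌋`. Then `Q^k` is the monomial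
ideal spanned by the monomials of order at least `k`. Since the variables `x_{ι j}` are distinct,
multiplying by `∏_{j ∈ S} x_{ι j}^{α j}` raises the order of every monomial by exactly `#S`, so
`g * ∏_{j ∈ S} x_{ι j}^{α j} ∈ Q^k` iff every monomial of `g` has order at least `k - #S`, that is,
iff `g ∈ Q^(k - #S)`.
-/

open MvPolynomial

namespace MvPolynomial

open Finset

variable {σ J K : Type*} [Fintype J] [CommSemiring K]

def pureOrder (ι : J → σ) (α : J → ℕ) (m : σ →₀ ℕ) : ℕ := ∑ j, m (ι j) / α j

theorem pureOrder_mono (ι : J → σ) (α : J → ℕ) : Monotone (pureOrder ι α) :=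
  fun _ _ h => sum_le_sum fun j _ => Nat.div_le_div_right (h (ι j))

variable {ι : J → σ} {α : J → ℕ}

theorem pureOrder_add_sum_single (hι : Function.Injective ι) (hα : ∀ j, 0 < α j)
    (m : σ →₀ ℕ) (S : Finset J) :
    pureOrder ι α (m + ∑ j ∈ S, Finsupp.single (ι j) (α j)) = pureOrder ι α m + #S := by
  classical
  have hcoord (j : J) :
      (m + ∑ j' ∈ S, Finsupp.single (ι j') (α j')) (ι j) / α j
        = m (ι j) / α j + if j ∈ S then 1 else 0 := by
    simp only [Finsupp.add_apply, Finsupp.finsetSum_apply, Finsupp.single_apply, hι.eq_iff,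
      sum_ite_eq']
    split_ifs
    · exact Nat.add_div_right _ (hα j)
    · simp
  simp only [pureOrder, hcoord, sum_add_distrib, sum_boole, filter_univ_mem, Nat.cast_id]

theorem pureOrder_add_single (hι : Function.Injective ι) (hα : ∀ j, 0 < α j)
    (m : σ →₀ ℕ) (j : J) :
    pureOrder ι α (m + Finsupp.single (ι j) (α j)) = pureOrder ι α m + 1 := by
  simpa using pureOrder_add_sum_single hι hα m {j}

theorem exists_le_of_pureOrder_pos {m : σ →₀ ℕ} (hm : 0 < pureOrder ι α m) :
    ∃ j, α j ≤ m (ι j) := by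
  by_contra! h
  exact hm.ne' (sum_eq_zero fun j _ => Nat.div_eq_of_lt (h j))

theorem span_X_pow_pow_eq (hι : Function.Injective ι) (hα : ∀ j, 0 < α j) (k : ℕ) :
    Ideal.span (Set.range fun j => (X (ι j) : MvPolynomial σ K) ^ α j) ^ k
      = Ideal.span ((fun m => monomial m (1 : K)) '' {m | k ≤ pureOrder ι α m}) := by
  refine le_antisymm ?_ ?_
  · induction k with
    | zero =>
      rw [pow_zero, Ideal.one_eq_top, top_le_iff, Ideal.eq_top_iff_one]
      exact Ideal.subset_span ⟨0, Nat.zero_le _, by simp⟩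
    | succ k ih =>
      rw [pow_succ]
      refine (Ideal.mul_mono_left ih).trans ?_
      rw [Ideal.span_mul_span', Ideal.span_le]
      rintro _ ⟨_, ⟨m, hm, rfl⟩, _, ⟨j, rfl⟩, rfl⟩
      refine Ideal.subset_span ⟨m + Finsupp.single (ι j) (α j), ?_, ?_⟩
      · simpa [pureOrder_add_single hι hα] using hm
      · show monomial _ 1 = monomial m 1 * X (ι j) ^ α j
        rw [X_pow_eq_monomial, monomial_mul, one_mul]
  · rw [Ideal.span_le]
    rintro _ ⟨m, hm, rfl⟩
    show monomial m (1 : K) ∈ _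
    induction k generalizing m with
    | zero => simp
    | succ k ih =>
      obtain ⟨j, hj⟩ := exists_le_of_pureOrder_pos (Nat.lt_of_lt_of_le k.succ_pos hm)
      have hsplit : m - Finsupp.single (ι j) (α j) + Finsupp.single (ι j) (α j) = m :=
        tsub_add_cancel_of_le (Finsupp.single_le_iff.2 hj)
      have hord := pureOrder_add_single hι hα (m - Finsupp.single (ι j) (α j)) j
      rw [hsplit] at hord
      rw [← hsplit, ← mul_one (1 : K), ← monomial_mul, pow_succ]
      exact Ideal.mul_mem_mul (ih _ (by rw [Set.mem_ofPred_eq] at hm ⊢; omega))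
        (Ideal.subset_span ⟨j, X_pow_eq_monomial⟩)

theorem mem_span_X_pow_pow_iff (hι : Function.Injective ι) (hα : ∀ j, 0 < α j) {k : ℕ}
    {p : MvPolynomial σ K} :
    p ∈ Ideal.span (Set.range fun j => (X (ι j) : MvPolynomial σ K) ^ α j) ^ k
      ↔ ∀ m ∈ p.support, k ≤ pureOrder ι α m := by
  rw [span_X_pow_pow_eq hι hα, mem_ideal_span_monomial_image]
  exact forall₂_congr fun m _ =>
    ⟨fun ⟨_, ht, hle⟩ => ht.trans (pureOrder_mono ι α hle), fun h => ⟨m, h, le_rfl⟩⟩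

theorem support_mul_monomial_one (p : MvPolynomial σ K) (μ : σ →₀ ℕ) :
    (p * monomial μ 1).support = p.support.map (addRightEmbedding μ) :=
  AddMonoidAlgebra.support_coeff_mul_single p _ (by simp) _

theorem colon_span_X_pow_pow_prod (hι : Function.Injective ι) (hα : ∀ j, 0 < α j)
    (k : ℕ) (S : Finset J) :
    (Ideal.span (Set.range fun j => (X (ι j) : MvPolynomial σ K) ^ α j) ^ k).colon
        (Ideal.span {∏ j ∈ S, (X (ι j) : MvPolynomial σ K) ^ α j})
      = Ideal.span (Set.range fun j => (X (ι j) : MvPolynomial σ K) ^ α j) ^ (k - #S) := by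
  have hprod : ∏ j ∈ S, (X (ι j) : MvPolynomial σ K) ^ α j
      = monomial (∑ j ∈ S, Finsupp.single (ι j) (α j)) 1 := by
    simp_rw [monomial_sum_one, X_pow_eq_monomial]
  ext p
  rw [Ideal.mem_colon_span_singleton, hprod, mem_span_X_pow_pow_iff hι hα,
    mem_span_X_pow_pow_iff hι hα, support_mul_monomial_one]
  simp [pureOrder_add_sum_single hι hα, tsub_le_iff_right]

end MvPolynomial

theorem stmt0_general {K : Type*} [Field K] {n r : ℕ}
    (ι : Fin r → Fin n) (hι : Function.Injective ι)
    (α : Fin r → ℕ) (hα : ∀ j, 1 ≤ α j)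
    (Q : Ideal (MvPolynomial (Fin n) K))
    (hQ : Q = Ideal.span
      (Set.range fun j : Fin r => (X (ι j) : MvPolynomial (Fin n) K) ^ α j))
    (s k : ℕ) (hs : s ≤ r) :
    Submodule.colon (Q ^ k)
      (Ideal.span {∏ j : Fin s,
        (X (ι (Fin.castLE hs j)) : MvPolynomial (Fin n) K) ^ α (Fin.castLE hs j)})
      = Q ^ (k - s) := by
  have hprod : ∏ j : Fin s,
        (X (ι (Fin.castLE hs j)) : MvPolynomial (Fin n) K) ^ α (Fin.castLE hs j)
      = ∏ j ∈ Finset.univ.map (Fin.castLEEmb hs), (X (ι j) : MvPolynomial (Fin n) K) ^ α j :=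
    (Finset.prod_map .univ (Fin.castLEEmb hs)
      fun j => (X (ι j) : MvPolynomial (Fin n) K) ^ α j).symm
  rw [hQ, hprod, colon_span_X_pow_pow_prod hι hα, Finset.card_map, Finset.card_univ,
    Fintype.card_fin]

/-- For `Q = (x_{i_1}^{α_1},…,x_{i_r}^{α_r})` generated by pure powers of
distinct variables, `(Q^k : ∏_{j=1}^s x_{i_j}^{α_j}) = Q^{k-s}` for `k > s`, `s ≤ r`. -/
theorem stmt0 {K : Type*} [Field K] {n r : ℕ}
    (ι : Fin r → Fin n) (hι : Function.Injective ι)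
    (α : Fin r → ℕ) (hα : ∀ j, 1 ≤ α j)
    (Q : Ideal (MvPolynomial (Fin n) K))
    (hQ : Q = Ideal.span
      (Set.range fun j : Fin r => (X (ι j) : MvPolynomial (Fin n) K) ^ α j))
    (s k : ℕ) (hs : s ≤ r) (hk : s < k) :
    Submodule.colon (Q ^ k)
      (Ideal.span {∏ j : Fin s,
        (X (ι (Fin.castLE hs j)) : MvPolynomial (Fin n) K) ^ α (Fin.castLE hs j)})
      = Q ^ (k - s) :=
  stmt0_general ι hι α hα Q hQ s k hs
end

section
/- Let $S$ be a commutative ring and $a_1,\ldots,a_m$ elements forming a permutable regular sequence on $S$. If $J$ is an ideal generated by monomials in $a_{t+1},\ldots,a_m$ for some $1 \le t \le m-1$, then $(J : a_1^{n_1} a_2^{n_2} \cdots a_t^{n_t}) = J$ for all natural numbers $n_1,\ldots,n_t$. -/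
/-!
An element `y` is a nonzerodivisor modulo `J` as soon as it is one modulo `J + (x)` and modulo
`J : x`. For a monomial ideal `J` in the `a j` and a variable `a v` dividing one of its generators
of degree at least two, write `J = J₀ + a_v J₁` with `J₀` generated by the monomials free of `a v`.
By induction on the total degree of the generators, `a v` is regular modulo `J₀`, so
`J : a_v = J₀ + J₁` and `J + (a_v) = J₀ + (a_v)` are monomial ideals of smaller total degree,
still free of `a k`; hence `a k` is regular modulo `J`. When all generators have degree at most
one, `J` is generated by some of the `a j`, and permutability is exactly what is needed.
Finally, products of elements regular modulo `J` are regular modulo `J`.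
-/

open Ideal

section Colon

variable {S : Type*} [CommRing S] {J I₀ I₁ : Ideal S} {r x y : S}

theorem Ideal.mem_colon_singleton : r ∈ J.colon {x} ↔ r * x ∈ J :=
  Submodule.mem_colon_singleton

theorem Ideal.colon_le_of_colon_sup_span_le
    (h₁ : (J ⊔ span {x}).colon {y} ≤ J ⊔ span {x})
    (h₂ : (J.colon {x}).colon {y} ≤ J.colon {x}) : J.colon {y} ≤ J := by
  intro s hs
  rw [mem_colon_singleton] at hs
  obtain ⟨j, hj, _, hr, rfl⟩ :=
    Submodule.mem_sup.1 (h₁ (mem_colon_singleton.2 (mem_sup_left hs)))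
  obtain ⟨r, rfl⟩ := mem_span_singleton'.1 hr
  have hry : r * y * x ∈ J := by
    have : r * y * x = (j + r * x) * y - j * y := by ring
    exact this ▸ sub_mem hs (J.mul_mem_right y hj)
  have hr : r * y ∈ J.colon {x} := mem_colon_singleton.2 hry
  exact add_mem hj (mem_colon_singleton.1 (h₂ (mem_colon_singleton.2 hr)))

theorem Ideal.colon_sup_span_singleton_mul (h : I₀.colon {x} ≤ I₀) :
    (I₀ ⊔ span {x} * I₁).colon {x} = I₀ ⊔ I₁ := by
  apply le_antisymm
  · intro s hs
    obtain ⟨i₀, hi₀, _, hw, hsum⟩ := Submodule.mem_sup.1 (mem_colon_singleton.1 hs)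
    obtain ⟨i₁, hi₁, rfl⟩ := mem_span_singleton_mul.1 hw
    have : (s - i₁) * x = i₀ := by rw [sub_mul, ← hsum]; ring
    have hs₀ : s - i₁ ∈ I₀ := h (mem_colon_singleton.2 (this ▸ hi₀))
    exact sub_add_cancel s i₁ ▸ add_mem (mem_sup_left hs₀) (mem_sup_right hi₁)
  · refine sup_le (fun s hs => ?_) (fun s hs => ?_) <;> rw [mem_colon_singleton]
    · exact mem_sup_left (I₀.mul_mem_right x hs)
    · exact mem_sup_right (mul_comm x s ▸ mul_mem_mul (mem_span_singleton_self x) hs)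

theorem Ideal.colon_singleton_mul_le (hx : J.colon {x} ≤ J) (hy : J.colon {y} ≤ J) :
    J.colon {x * y} ≤ J := fun s hs => by
  rw [mem_colon_singleton, ← mul_assoc] at hs
  exact hx (mem_colon_singleton.2 (hy (mem_colon_singleton.2 hs)))

theorem Ideal.colon_singleton_pow_le (hx : J.colon {x} ≤ J) (n : ℕ) :
    J.colon {x ^ n} ≤ J := by
  induction n with
  | zero => intro s hs; simpa [mem_colon_singleton] using hs
  | succ n ih => rw [pow_succ]; exact colon_singleton_mul_le ih hx

theorem Ideal.colon_singleton_prod_le {ι : Type*} {s : Finset ι} {f : ι → S}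
    (h : ∀ i ∈ s, J.colon {f i} ≤ J) : J.colon {∏ i ∈ s, f i} ≤ J :=
  Finset.prod_induction f (fun x => J.colon {x} ≤ J) (fun _ _ => colon_singleton_mul_le)
    (fun s hs => by simpa [mem_colon_singleton] using hs) h

end Colon

namespace SeqMonomial

variable {S ι : Type*} [CommRing S] [Fintype ι] (a : ι → S)

def eval (c : ι → ℕ) : S := ∏ j, a j ^ c j

def degree (c : ι → ℕ) : ℕ := ∑ j, c j

def ideal (E : Set (ι → ℕ)) : Ideal S := span (eval a '' E)

variable {a}

theorem eval_add (c d : ι → ℕ) : eval a (c + d) = eval a c * eval a d := by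
  simp only [eval, Pi.add_apply, pow_add, Finset.prod_mul_distrib]

theorem eval_zero : eval a 0 = 1 := by simp [eval]

theorem le_degree (c : ι → ℕ) (v : ι) : c v ≤ degree c :=
  Finset.single_le_sum (fun _ _ => Nat.zero_le _) (Finset.mem_univ v)

theorem ideal_union (E F : Set (ι → ℕ)) : ideal a (E ∪ F) = ideal a E ⊔ ideal a F := by
  rw [ideal, Set.image_union, span_union]; rfl

variable [DecidableEq ι]

theorem eval_single (v : ι) : eval a (Pi.single v 1) = a v := by
  rw [eval, Finset.prod_eq_single v (fun j _ hj => by simp [hj]) (by simp)]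
  simp

theorem eval_sub_single_mul {c : ι → ℕ} {v : ι} (hv : c v ≠ 0) :
    eval a (c - Pi.single v 1) * a v = eval a c := by
  have hle : Pi.single v 1 ≤ c := fun j => by
    rcases eq_or_ne j v with rfl | hj
    · simp; omega
    · simp [hj]
  rw [← eval_single (a := a) v, ← eval_add, tsub_add_cancel_of_le hle]

theorem degree_sub_single_add_one {c : ι → ℕ} {v : ι} (hv : c v ≠ 0) :
    degree (c - Pi.single v 1) + 1 = degree c := by
  have hrest : ∑ j ∈ Finset.univ.erase v, (c - Pi.single v 1 : ι → ℕ) j =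
      ∑ j ∈ Finset.univ.erase v, c j :=
    Finset.sum_congr rfl fun j hj => by simp [Finset.ne_of_mem_erase hj]
  rw [degree, degree, ← Finset.sum_erase_add _ _ (Finset.mem_univ v),
    ← Finset.sum_erase_add _ _ (Finset.mem_univ v), hrest]
  simp only [Pi.sub_apply, Pi.single_eq_same]
  omega

theorem eq_single_of_degree_le_one {c : ι → ℕ} {v : ι} (hc : degree c ≤ 1)
    (hv : c v ≠ 0) : c = Pi.single v 1 := by
  funext j
  rcases eq_or_ne j v with rfl | hj
  · have := le_degree c j
    simp; omega
  · have : c j + c v ≤ degree c := by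
      rw [← Finset.sum_pair hj]; exact Finset.sum_le_sum_of_subset (Finset.subset_univ _)
    simp [hj]; omega

theorem ideal_insert_single (v : ι) (E : Set (ι → ℕ)) :
    ideal a (insert (Pi.single v 1) E) = ideal a E ⊔ span {a v} := by
  rw [ideal, Set.image_insert_eq, eval_single, span_insert, sup_comm]; rfl

theorem span_singleton_mul_ideal_image_sub_single {E : Set (ι → ℕ)} {v : ι}
    (hE : ∀ c ∈ E, c v ≠ 0) :
    span {a v} * ideal a ((· - Pi.single v 1) '' E) = ideal a E := by
  rw [ideal, ideal, span_mul_span', Set.singleton_mul, Set.image_image, Set.image_image]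
  congr 1
  exact Set.image_congr fun c hc => by rw [mul_comm, eval_sub_single_mul (hE c hc)]

theorem ideal_eq_sup_span_singleton_mul (G : Finset (ι → ℕ)) (v : ι) :
    ideal a G = ideal a ↑(G.filter (· v = 0)) ⊔
      span {a v} * ideal a ↑((G.filter (· v ≠ 0)).image (· - Pi.single v 1)) := by
  rw [Finset.coe_image,
    span_singleton_mul_ideal_image_sub_single fun c hc => (Finset.mem_filter.1 hc).2,
    ← ideal_union, ← Finset.coe_union, Finset.filter_union_filter_not_eq]

theorem sum_degree_image_sub_single_lt {G : Finset (ι → ℕ)} {v : ι}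
    (hG : ∀ c ∈ G, c v ≠ 0) (hne : G.Nonempty) :
    ∑ c ∈ G.image (· - Pi.single v 1), degree c < ∑ c ∈ G, degree c :=
  calc ∑ c ∈ G.image (· - Pi.single v 1), degree c
      ≤ ∑ c ∈ G, degree (c - Pi.single v 1) :=
        Finset.sum_image_le_of_nonneg fun _ _ => Nat.zero_le _
    _ < ∑ c ∈ G, degree c := Finset.sum_lt_sum_of_nonempty hne fun c hc =>
        degree_sub_single_add_one (hG c hc) ▸ Nat.lt_add_one _

theorem colon_ideal_le_of_two_le_degree {G : Finset (ι → ℕ)}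
    (IH : ∀ G' : Finset (ι → ℕ), ∑ c ∈ G', degree c < ∑ c ∈ G, degree c →
      ∀ k, (∀ c ∈ G', c k = 0) → (ideal a G').colon {a k} ≤ ideal a G')
    {c₀ : ι → ℕ} (hc₀ : c₀ ∈ G) (hdeg : 2 ≤ degree c₀) {k : ι}
    (hk : ∀ c ∈ G, c k = 0) :
    (ideal a G).colon {a k} ≤ ideal a G := by
  obtain ⟨v, hv⟩ : ∃ v, c₀ v ≠ 0 := by
    by_contra! h
    simp [degree, h] at hdeg
  have hkv : k ≠ v := fun h => hv (h ▸ hk c₀ hc₀)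
  set G₀ := G.filter (· v = 0)
  set G₁ := G.filter (· v ≠ 0)
  set G₁' := G₁.image (· - Pi.single v 1)
  have hc₀G₁ : c₀ ∈ G₁ := Finset.mem_filter.2 ⟨hc₀, hv⟩
  have hsplit : ∑ c ∈ G, degree c = ∑ c ∈ G₀, degree c + ∑ c ∈ G₁, degree c :=
    (Finset.sum_filter_add_sum_filter_not _ _ _).symm
  have hG₁ : degree c₀ ≤ ∑ c ∈ G₁, degree c :=
    Finset.single_le_sum (fun _ _ => Nat.zero_le _) hc₀G₁
  have hG₁' : ∑ c ∈ G₁', degree c < ∑ c ∈ G₁, degree c :=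
    sum_degree_image_sub_single_lt (fun c hc => (Finset.mem_filter.1 hc).2) ⟨c₀, hc₀G₁⟩
  have hJ : ideal a G = ideal a G₀ ⊔ span {a v} * ideal a G₁' :=
    ideal_eq_sup_span_singleton_mul G v
  have hG₀ : (ideal a G₀).colon {a v} ≤ ideal a G₀ :=
    IH G₀ (by omega) v fun c hc => (Finset.mem_filter.1 hc).2
  apply colon_le_of_colon_sup_span_le (x := a v)
  · have hsup : ideal a G ⊔ span {a v} = ideal a ↑(insert (Pi.single v 1) G₀) := by
      rw [hJ, Finset.coe_insert, ideal_insert_single, sup_assoc,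
        sup_eq_right.2 (mul_le_left : span {a v} * ideal a G₁' ≤ _)]
    have hnotin : Pi.single v 1 ∉ G₀ := fun h => by simpa using (Finset.mem_filter.1 h).2
    have hsingle : degree (Pi.single v 1 : ι → ℕ) = 1 := by simp [degree]
    rw [hsup]
    refine IH _ ?_ k fun c hc => ?_
    · rw [Finset.sum_insert hnotin, hsingle]
      omega
    · rcases Finset.mem_insert.1 hc with rfl | hc
      · exact Pi.single_eq_of_ne hkv 1
      · exact hk c (Finset.mem_filter.1 hc).1
  · rw [hJ, colon_sup_span_singleton_mul hG₀, ← ideal_union, ← Finset.coe_union]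
    refine IH _ ?_ k fun c hc => ?_
    · have := Finset.sum_union_inter (s₁ := G₀) (s₂ := G₁') (f := degree)
      omega
    · rcases Finset.mem_union.1 hc with hc | hc
      · exact hk c (Finset.mem_filter.1 hc).1
      · obtain ⟨c', hc', rfl⟩ := Finset.mem_image.1 hc
        simp [Pi.single_eq_of_ne hkv, hk c' (Finset.mem_filter.1 hc').1]

end SeqMonomial

open SeqMonomial

section PermutableRegular

variable {S ι : Type*} [CommRing S]

def IsPermutableRegular (a : ι → S) : Prop :=
  ∀ (T : Finset ι) (k : ι), k ∉ T → (span (a '' T)).colon {a k} ≤ span (a '' T)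

namespace IsPermutableRegular

variable [Fintype ι] [DecidableEq ι] {a : ι → S}

theorem colon_ideal_le_of_degree_le_one (ha : IsPermutableRegular a) {G : Finset (ι → ℕ)}
    (hG : ∀ c ∈ G, degree c ≤ 1) {k : ι} (hk : ∀ c ∈ G, c k = 0) :
    (ideal a G).colon {a k} ≤ ideal a G := by
  by_cases h0 : (0 : ι → ℕ) ∈ G
  · have h1 : (1 : S) ∈ ideal a G := subset_span ⟨0, h0, eval_zero⟩
    rw [eq_top_of_isUnit_mem _ h1 isUnit_one]
    exact le_top
  set T := Finset.univ.filter fun v => ∃ c ∈ G, c v ≠ 0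
  have hT : ideal a G = span (a '' T) := by
    apply le_antisymm <;> rw [ideal, span_le]
    · rintro _ ⟨c, hc, rfl⟩
      obtain ⟨v, hv⟩ : ∃ v, c v ≠ 0 := by
        by_contra! h
        exact h0 ((funext h : c = 0) ▸ hc)
      rw [eq_single_of_degree_le_one (hG c hc) hv, eval_single]
      exact subset_span ⟨v, by simpa [T] using ⟨c, hc, hv⟩, rfl⟩
    · rintro _ ⟨v, hv, rfl⟩
      obtain ⟨c, hc, hcv⟩ : ∃ c ∈ G, c v ≠ 0 := by simpa [T] using hv
      rw [← eval_single (a := a) v, ← eq_single_of_degree_le_one (hG c hc) hcv]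
      exact subset_span ⟨c, hc, rfl⟩
  rw [hT]
  exact ha T k (by simpa [T] using hk)

theorem colon_ideal_finset_le (ha : IsPermutableRegular a) (G : Finset (ι → ℕ)) (k : ι)
    (hk : ∀ c ∈ G, c k = 0) : (ideal a G).colon {a k} ≤ ideal a G := by
  induction hn : ∑ c ∈ G, degree c using Nat.strong_induction_on generalizing G k with
  | _ n IH =>
    by_cases hG : ∃ c ∈ G, 2 ≤ degree c
    · obtain ⟨c₀, hc₀, hdeg⟩ := hG
      exact colon_ideal_le_of_two_le_degree
        (fun G' hG' k' hk' => IH _ (hn ▸ hG') G' k' hk' rfl) hc₀ hdeg hk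
    · push Not at hG
      exact ha.colon_ideal_le_of_degree_le_one (fun c hc => by have := hG c hc; omega) hk

theorem colon_ideal_le (ha : IsPermutableRegular a) (E : Set (ι → ℕ)) (k : ι)
    (hk : ∀ c ∈ E, c k = 0) : (ideal a E).colon {a k} ≤ ideal a E := by
  classical
  intro s hs
  obtain ⟨F, hFE, hsF⟩ := Submodule.mem_span_finite_of_mem_span (mem_colon_singleton.1 hs)
  obtain ⟨G, hGE, rfl⟩ := Finset.subset_set_image_iff.1 hFE
  have hGE' : ideal a G ≤ ideal a E := span_mono (Set.image_mono hGE)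
  refine hGE' (ha.colon_ideal_finset_le G k (fun c hc => hk c (hGE hc)) ?_)
  rwa [mem_colon_singleton, ideal, ← Finset.coe_image]

end IsPermutableRegular

theorem isPermutableRegular_of_forall_perm {m : ℕ} {a : Fin m → S}
    (hreg : ∀ σ : Equiv.Perm (Fin m), ∀ i : Fin m, ∀ s : S,
      a (σ i) * s ∈ Ideal.span {x | ∃ j : Fin m, j < i ∧ x = a (σ j)} →
      s ∈ Ideal.span {x | ∃ j : Fin m, j < i ∧ x = a (σ j)}) :
    IsPermutableRegular a := by
  intro T k hk
  have hcard : T.card < m := by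
    simpa [Finset.card_insert_of_notMem hk] using Finset.card_le_univ (insert k T)
  set i : Fin m := ⟨T.card, hcard⟩
  let e : {j : Fin m // j < i} ≃ {x // x ∈ T} :=
    Fintype.equivOfCardEq (by simp [Fintype.card_subtype, Finset.filter_gt_eq_Iio, i])
  set σ := Equiv.swap (e.extendSubtype i) k * e.extendSubtype
  have hσi : σ i = k := by simp [σ]
  have hσ : ∀ j (hj : j < i), σ j = e ⟨j, hj⟩ := by
    intro j hj
    have he : e.extendSubtype j = e ⟨j, hj⟩ := Equiv.extendSubtype_apply_of_mem e j hj
    rw [Equiv.Perm.mul_apply, he, Equiv.swap_apply_of_ne_of_ne]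
    · rw [← he]
      exact e.extendSubtype.injective.ne hj.ne
    · exact fun h => hk (h ▸ (e ⟨j, hj⟩).2)
  have hset : {x | ∃ j : Fin m, j < i ∧ x = a (σ j)} = a '' T := by
    ext x
    constructor
    · rintro ⟨j, hj, rfl⟩
      exact ⟨_, (e ⟨j, hj⟩).2, by rw [hσ j hj]⟩
    · rintro ⟨y, hy, rfl⟩
      refine ⟨e.symm ⟨y, hy⟩, (e.symm ⟨y, hy⟩).2, ?_⟩
      rw [hσ _ (e.symm ⟨y, hy⟩).2]
      simp
  intro s hs
  have := hreg σ i s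
  rw [hset, hσi] at this
  exact this (mul_comm s (a k) ▸ mem_colon_singleton.1 hs)

end PermutableRegular

theorem stmt1_general {S : Type*} [CommRing S] {m : ℕ} (a : Fin m → S)
    (hreg : ∀ σ : Equiv.Perm (Fin m), ∀ i : Fin m, ∀ s : S,
      a (σ i) * s ∈ Ideal.span {x | ∃ j : Fin m, j < i ∧ x = a (σ j)} →
      s ∈ Ideal.span {x | ∃ j : Fin m, j < i ∧ x = a (σ j)})
    (t : ℕ)
    (J : Ideal S)
    (hJ : ∃ G : Set S,
      (∀ g ∈ G, ∃ c : Fin m → ℕ, (∀ j : Fin m, (j : ℕ) < t → c j = 0) ∧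
        g = ∏ j, a j ^ c j) ∧ J = Ideal.span G)
    (nn : Fin m → ℕ) :
    Submodule.colon J
      (Ideal.span {∏ j ∈ Finset.univ.filter (fun j : Fin m => (j : ℕ) < t), a j ^ nn j})
      = J := by
  obtain ⟨G, hG, rfl⟩ := hJ
  set E := {c : Fin m → ℕ | (∀ j : Fin m, (j : ℕ) < t → c j = 0) ∧ eval a c ∈ G}
  have hGE : span G = ideal a E := by
    congr 1
    ext g
    refine ⟨fun hg => ?_, fun ⟨c, hc, hcg⟩ => hcg ▸ hc.2⟩
    obtain ⟨c, hc, rfl⟩ := hG g hg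
    exact ⟨c, ⟨hc, hg⟩, rfl⟩
  have hk : ∀ k : Fin m, (k : ℕ) < t → (span G).colon {a k} ≤ span G := fun k hkt => by
    rw [hGE]
    exact (isPermutableRegular_of_forall_perm hreg).colon_ideal_le E k fun c hc => hc.1 k hkt
  refine le_antisymm ?_ le_colon
  rw [colon_span]
  exact colon_singleton_prod_le fun j hj =>
    colon_singleton_pow_le (hk j (Finset.mem_filter.1 hj).2) _

/-- If `a₁,…,aₘ` is a permutable regular sequence on a commutative ring `S`
and `J` is generated by monomials in `a_{t+1},…,aₘ`, then
`(J : a₁^{n₁}⋯a_t^{n_t}) = J`. -/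
theorem stmt1 {S : Type*} [CommRing S] {m : ℕ} (a : Fin m → S)
    (hreg : ∀ σ : Equiv.Perm (Fin m), ∀ i : Fin m, ∀ s : S,
      a (σ i) * s ∈ Ideal.span {x | ∃ j : Fin m, j < i ∧ x = a (σ j)} →
      s ∈ Ideal.span {x | ∃ j : Fin m, j < i ∧ x = a (σ j)})
    (t : ℕ) (ht1 : 1 ≤ t) (ht2 : t ≤ m - 1)
    (J : Ideal S)
    (hJ : ∃ G : Set S,
      (∀ g ∈ G, ∃ c : Fin m → ℕ, (∀ j : Fin m, (j : ℕ) < t → c j = 0) ∧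
        g = ∏ j, a j ^ c j) ∧ J = Ideal.span G)
    (nn : Fin m → ℕ) :
    Submodule.colon J
      (Ideal.span {∏ j ∈ Finset.univ.filter (fun j : Fin m => (j : ℕ) < t), a j ^ nn j})
      = J :=
  stmt1_general a hreg t J hJ nn
end

section
/- Let $I \subset R = K[x_1,\ldots,x_n]$ be a square-free monomial ideal, $\ell \ge 1$ an integer, and $v \in I^\ell$ a square-free monomial such that $(\mathfrak{p}^t : v) = \mathfrak{p}^{t-\ell}$ for all $\mathfrak{p} \in \mathrm{Min}(I)$ and all $t > \ell$, and such that $I^{t-\ell} = I^{(t-\ell)}$ for all $t > \ell$. Then $(I^t : v) = I^{t-\ell}$ for all $t > \ell$. -/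
open MvPolynomial

/-- A square-free monomial ideal: generated by square-free monomials. -/
def IsSqFreeMonomialIdeal {n : ℕ} {K : Type*} [Field K]
    (I : Ideal (MvPolynomial (Fin n) K)) : Prop :=
  ∃ S : Set (Fin n →₀ ℕ), (∀ d ∈ S, ∀ i, d i ≤ 1) ∧
    I = Ideal.span ((fun d => (monomial d (1 : K) : MvPolynomial (Fin n) K)) '' S)

/-- If `v ∈ I^ℓ` is a square-free monomial with `(𝔭^t : v) = 𝔭^{t-ℓ}`
for all minimal primes `𝔭` of `I` and all `t > ℓ`, and `I^{t-ℓ} = I^{(t-ℓ)}` for all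
`t > ℓ`, then `(I^t : v) = I^{t-ℓ}` for all `t > ℓ`. -/
theorem stmt5 {n : ℕ} {K : Type*} [Field K]
    (I : Ideal (MvPolynomial (Fin n) K)) (hI : IsSqFreeMonomialIdeal I)
    (ℓ : ℕ) (hℓ : 1 ≤ ℓ)
    (v : MvPolynomial (Fin n) K)
    (hvmono : ∃ d : Fin n →₀ ℕ, (∀ i, d i ≤ 1) ∧ v = monomial d (1 : K))
    (hv : v ∈ I ^ ℓ)
    (hcolon : ∀ p ∈ I.minimalPrimes, ∀ t : ℕ, ℓ < t →
      Submodule.colon (p ^ t) (Ideal.span {v}) = p ^ (t - ℓ))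
    (hsym : ∀ t : ℕ, ℓ < t →
      I ^ (t - ℓ) = ⨅ p ∈ I.minimalPrimes, p ^ (t - ℓ)) :
    ∀ t : ℕ, ℓ < t →
      Submodule.colon (I ^ t) (Ideal.span {v}) = I ^ (t - ℓ) := by
  intro t ht
  apply le_antisymm
  · rw [hsym t ht]
    refine le_iInf₂ fun p hp => ?_
    rw [← hcolon p hp t ht]
    exact Submodule.colon_mono
      (Ideal.pow_right_mono hp.1.2 t) le_rfl
  · intro g hg
    rw [Submodule.mem_colon]
    intro x hx
    obtain ⟨a, ha⟩ := Ideal.mem_span_singleton'.mp hx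
    have key : g * v ∈ I ^ t := by
      have : I ^ (t - ℓ) * I ^ ℓ = I ^ t := by
        rw [← pow_add, Nat.sub_add_cancel ht.le]
      rw [← this]
      exact Ideal.mul_mem_mul hg hv
    rw [← ha]
    rw [smul_eq_mul, show g * (a * v) = a * (g * v) by ring]
    exact Ideal.mul_mem_left _ _ key
end

section
/- Let $I \subset R = K[x_1,\ldots,x_n]$ be a square-free monomial ideal, let $\mathfrak{p}$ be a monomial prime ideal with $\mathrm{ht}\,\mathfrak{p} = m$, and let $u_1,\ldots,u_m \in I$ be pairwise coprime monomials contained in $\mathfrak{p}$ (an independent set of generators of size $m$). Then $(\mathfrak{p}^r : \prod_{i=1}^m u_i) = \mathfrak{p}^{r-m}$ for all $r > m$. -/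
/-!
The `r`-th power of the monomial prime `𝔭 = (x_j : j ∈ T)` consists of the polynomials all of whose
monomials have degree at least `r` in the variables of `T`; hence the colon of `𝔭 ^ r` by a
monomial `u` is `𝔭 ^ (r - k)`, where `k` is the `T`-degree of `u`. For `u = ∏ uᵢ` this degree is
exactly `m = #T`: each `uᵢ` involves a variable of `T`, and since the `uᵢ` are square-free and
pairwise coprime, no variable occurs twice in `u`.
-/

open MvPolynomial

namespace MvPolynomial

variable {σ R : Type*} [CommSemiring R] {T : Finset σ}

theorem le_sum_apply_of_mem_pow_span_X_image {r : ℕ} {f : MvPolynomial σ R}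
    (hf : f ∈ Ideal.span (X '' (T : Set σ)) ^ r) {e : σ →₀ ℕ} (he : e ∈ f.support) :
    r ≤ ∑ j ∈ T, e j := by
  classical
  induction r generalizing f e with
  | zero => exact Nat.zero_le _
  | succ r ih =>
    rw [pow_succ] at hf
    refine Submodule.mul_induction_on hf (fun a ha b hb e he => ?_) (fun a b ha hb e he => ?_) e he
    · obtain ⟨x, hx, y, hy, rfl⟩ := Finset.mem_add.mp (support_mul a b he)
      obtain ⟨j, hjT, hj⟩ := mem_ideal_span_X_image.mp hb y hy
      have hy1 : 1 ≤ ∑ j ∈ T, y j :=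
        (Nat.one_le_iff_ne_zero.mpr hj).trans (Finset.single_le_sum (by simp) hjT)
      simpa [Finset.sum_add_distrib] using add_le_add (ih ha hx) hy1
    · rcases Finset.mem_union.mp (support_add he) with h | h
      exacts [ha e h, hb e h]

theorem monomial_mem_pow_span_X_image {r : ℕ} {e : σ →₀ ℕ} (c : R)
    (h : r ≤ ∑ j ∈ T, e j) : monomial e c ∈ Ideal.span (X '' (T : Set σ)) ^ r := by
  classical
  induction r generalizing e with
  | zero => simp
  | succ r ih =>
    obtain ⟨j, hjT, hj⟩ : ∃ j ∈ T, e j ≠ 0 :=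
      Finset.exists_ne_zero_of_sum_ne_zero (by omega)
    obtain ⟨e', rfl⟩ := le_iff_exists_add'.mp
      (Finsupp.single_le_iff.mpr (Nat.one_le_iff_ne_zero.mpr hj) : Finsupp.single j 1 ≤ e)
    have hsum : ∑ i ∈ T, (e' + Finsupp.single j 1 : σ →₀ ℕ) i = ∑ i ∈ T, e' i + 1 := by
      simp [Finset.sum_add_distrib, Finsupp.single_apply, hjT]
    rw [monomial_add_single, pow_one, pow_succ]
    exact Ideal.mul_mem_mul (ih (by omega)) (Ideal.subset_span ⟨j, hjT, rfl⟩)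

theorem mem_pow_span_X_image_iff {r : ℕ} {f : MvPolynomial σ R} :
    f ∈ Ideal.span (X '' (T : Set σ)) ^ r ↔ ∀ e ∈ f.support, r ≤ ∑ j ∈ T, e j := by
  refine ⟨fun hf e he => le_sum_apply_of_mem_pow_span_X_image hf he, fun h => ?_⟩
  rw [f.as_sum]
  exact Ideal.sum_mem _ fun e he => monomial_mem_pow_span_X_image _ (h e he)

theorem colon_pow_span_X_image_monomial (r : ℕ) (D : σ →₀ ℕ) :
    Submodule.colon (Ideal.span (X '' (T : Set σ)) ^ r)
        (Ideal.span {monomial D (1 : R)} : Set (MvPolynomial σ R)) =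
      Ideal.span (X '' (T : Set σ)) ^ (r - ∑ j ∈ T, D j) := by
  ext f
  rw [Ideal.mem_colon_span_singleton, mem_pow_span_X_image_iff, mem_pow_span_X_image_iff]
  constructor
  · intro h e he
    have hcoeff : coeff (e + D) (f * monomial D 1) ≠ 0 := by
      rwa [coeff_mul_monomial, mul_one, ← mem_support_iff]
    have := h (e + D) (mem_support_iff.mpr hcoeff)
    simp only [Finsupp.add_apply, Finset.sum_add_distrib] at this
    omega
  · intro h
    have hfu := Ideal.mul_mem_mul (mem_pow_span_X_image_iff.mpr h)
      (monomial_mem_pow_span_X_image (T := T) (e := D) (1 : R) le_rfl)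
    rw [← pow_add] at hfu
    exact mem_pow_span_X_image_iff.mp (Ideal.pow_le_pow_right le_tsub_add hfu)

end MvPolynomial

theorem Finsupp.sum_apply_le_one_of_pairwise_disjoint {ι σ : Type*} {s : Finset ι}
    {d : ι → σ →₀ ℕ} (hsf : ∀ i j, d i j ≤ 1)
    (hcop : ∀ i j, i ≠ j → Disjoint (d i).support (d j).support) (j : σ) :
    (∑ i ∈ s, d i) j ≤ 1 := by
  rw [Finsupp.finsetSum_apply]
  by_cases hz : ∀ i ∈ s, d i j = 0
  · simp [Finset.sum_eq_zero hz]
  push Not at hz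
  obtain ⟨i₀, hi₀, hne⟩ := hz
  rw [Finset.sum_eq_single_of_mem i₀ hi₀ fun i _ hi => Finsupp.notMem_support_iff.mp
    fun hmem => Finset.disjoint_left.mp (hcop i i₀ hi) hmem (Finsupp.mem_support_iff.mpr hne)]
  exact hsf i₀ j

theorem Finsupp.sum_sum_apply_eq_card {ι σ : Type*} [Fintype ι] {T : Finset σ}
    {d : ι → σ →₀ ℕ} (hT : T.card = Fintype.card ι) (hsf : ∀ i j, d i j ≤ 1)
    (hcop : ∀ i j, i ≠ j → Disjoint (d i).support (d j).support)
    (hmem : ∀ i, ∃ j ∈ T, d i j ≠ 0) :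
    ∑ j ∈ T, (∑ i, d i) j = Fintype.card ι := by
  refine le_antisymm ?_ ?_
  · calc ∑ j ∈ T, (∑ i, d i) j ≤ ∑ _j ∈ T, 1 :=
          Finset.sum_le_sum fun j _ => sum_apply_le_one_of_pairwise_disjoint hsf hcop j
      _ = Fintype.card ι := by simp [hT]
  · calc Fintype.card ι = ∑ _i : ι, 1 := by simp
      _ ≤ ∑ i, ∑ j ∈ T, d i j := Finset.sum_le_sum fun i _ => by
          obtain ⟨j, hjT, hj⟩ := hmem i
          exact (Nat.one_le_iff_ne_zero.mpr hj).trans (Finset.single_le_sum (by simp) hjT)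
      _ = ∑ j ∈ T, (∑ i, d i) j := by
          simp only [Finsupp.finsetSum_apply]
          exact Finset.sum_comm

theorem stmt6_general {n : ℕ} {K : Type*} [Field K]
    (m : ℕ) (T : Finset (Fin n)) (hT : T.card = m)
    (p : Ideal (MvPolynomial (Fin n) K))
    (hp : p = Ideal.span ((fun i => (X i : MvPolynomial (Fin n) K)) '' (T : Set (Fin n))))
    (d : Fin m → (Fin n →₀ ℕ))
    (hsf : ∀ i : Fin m, ∀ j : Fin n, d i j ≤ 1)
    (hcop : ∀ i j : Fin m, i ≠ j → Disjoint (d i).support (d j).support)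
    (hmemp : ∀ i : Fin m, (monomial (d i) (1 : K) : MvPolynomial (Fin n) K) ∈ p)
    (r : ℕ) :
    Submodule.colon (p ^ r)
      (Ideal.span {∏ i : Fin m, (monomial (d i) (1 : K) : MvPolynomial (Fin n) K)})
      = p ^ (r - m) := by
  subst hp
  have hvar : ∀ i, ∃ j ∈ T, d i j ≠ 0 := fun i =>
    mem_ideal_span_X_image.mp (hmemp i) (d i) (by simp)
  have hdeg : ∑ j ∈ T, (∑ i, d i) j = m := by
    simpa using Finsupp.sum_sum_apply_eq_card (by simp [hT]) hsf hcop hvar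
  have hcolon := colon_pow_span_X_image_monomial (R := K) (T := T) r (∑ i, d i)
  rwa [hdeg, monomial_sum_one] at hcolon

/-- If `𝔭` is a monomial prime of height `m` and `u₁,…,u_m ∈ I ∩ 𝔭` are
pairwise coprime square-free monomials, then `(𝔭^r : ∏ uᵢ) = 𝔭^{r-m}` for `r > m`. -/
theorem stmt6 {n : ℕ} {K : Type*} [Field K]
    (I : Ideal (MvPolynomial (Fin n) K)) (hI : IsSqFreeMonomialIdeal I)
    (m : ℕ) (T : Finset (Fin n)) (hT : T.card = m)
    (p : Ideal (MvPolynomial (Fin n) K))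
    (hp : p = Ideal.span ((fun i => (X i : MvPolynomial (Fin n) K)) '' (T : Set (Fin n))))
    (d : Fin m → (Fin n →₀ ℕ))
    (hsf : ∀ i : Fin m, ∀ j : Fin n, d i j ≤ 1)
    (hcop : ∀ i j : Fin m, i ≠ j → Disjoint (d i).support (d j).support)
    (hmemI : ∀ i : Fin m, (monomial (d i) (1 : K) : MvPolynomial (Fin n) K) ∈ I)
    (hmemp : ∀ i : Fin m, (monomial (d i) (1 : K) : MvPolynomial (Fin n) K) ∈ p)
    (r : ℕ) (hr : m < r) :
    Submodule.colon (p ^ r)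
      (Ideal.span {∏ i : Fin m, (monomial (d i) (1 : K) : MvPolynomial (Fin n) K)})
      = p ^ (r - m) :=
  stmt6_general m T hT p hp d hsf hcop hmemp r
end

section
/- Let $I \subset R = K[x_1,\ldots,x_n]$ be a square-free monomial ideal, $\ell \ge 1$, and $v \in I^\ell$ a square-free monomial such that $v \in \mathfrak{p}^\ell \setminus \mathfrak{p}^{\ell+1}$ for every $\mathfrak{p} \in \mathrm{Min}(I)$. Then for every $\mathfrak{p} \in \mathrm{Min}(I)$ and every $t > \ell$, one has $(\mathfrak{p}^t : v) = \mathfrak{p}^{t-\ell}$. -/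
open MvPolynomial

/-!
A minimal prime `𝔭` of a monomial ideal is generated by the variables it contains, say those
indexed by `s`. A polynomial lies in `𝔭 ^ k` iff each of its monomials has degree at least `k` in
these variables. So `v ∈ 𝔭 ^ ℓ \ 𝔭 ^ (ℓ + 1)` says that the monomial `v` has `s`-degree exactly
`ℓ`, and since multiplication by `v` shifts `s`-degrees by `ℓ`, `(𝔭 ^ t : v) = 𝔭 ^ (t - ℓ)`.
-/

namespace Finsupp

variable {σ : Type*}

noncomputable def degreeOn (s : Set σ) : (σ →₀ ℕ) →+ ℕ :=
  weight (s.indicator 1)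

variable {s : Set σ} {d e : σ →₀ ℕ}

theorem degreeOn_mono (h : d ≤ e) : degreeOn s d ≤ degreeOn s e := by
  obtain ⟨c, rfl⟩ := le_iff_exists_add.mp h
  simp

theorem le_degreeOn {i : σ} (hi : i ∈ s) (d : σ →₀ ℕ) : d i ≤ degreeOn s d :=
  le_weight _ (by simp [hi]) d

theorem degreeOn_sub_single_add {i : σ} (hi : i ∈ s) (hd : d i ≠ 0) :
    degreeOn s (d - single i 1) + 1 = degreeOn s d := by
  have h := weight_sub_single_add (w := s.indicator (1 : σ → ℕ)) hd
  rwa [Set.indicator_of_mem hi, Pi.one_apply] at h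

theorem exists_mem_ne_zero_of_degreeOn_pos (h : 0 < degreeOn s d) : ∃ i ∈ s, d i ≠ 0 := by
  contrapose! h
  rw [degreeOn, weight_apply, Nat.le_zero]
  refine Finset.sum_eq_zero fun i _ => ?_
  by_cases hi : i ∈ s
  · simp [h i hi]
  · simp [hi]

end Finsupp

namespace MvPolynomial

open Finsupp

variable {σ R : Type*}

section CommSemiring

variable [CommSemiring R] {s : Set σ}

noncomputable def degreeOnIdeal (s : Set σ) (k : ℕ) : Ideal (MvPolynomial σ R) :=
  restrictSupportIdeal R {d | k ≤ degreeOn s d} fun _ _ hde hd => hd.trans (degreeOn_mono hde)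

theorem mem_degreeOnIdeal {k : ℕ} {f : MvPolynomial σ R} :
    f ∈ degreeOnIdeal s k ↔ ∀ d ∈ f.support, k ≤ degreeOn s d :=
  Iff.rfl

theorem degreeOnIdeal_mul_le (a b : ℕ) :
    degreeOnIdeal s a * degreeOnIdeal s b ≤
      (degreeOnIdeal s (a + b) : Ideal (MvPolynomial σ R)) := by
  classical
  refine Ideal.mul_le.mpr fun f hf g hg => mem_degreeOnIdeal.mpr fun d hd => ?_
  obtain ⟨x, hx, y, hy, rfl⟩ := Finset.mem_add.mp (support_mul f g hd)
  rw [map_add]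
  exact add_le_add (mem_degreeOnIdeal.mp hf x hx) (mem_degreeOnIdeal.mp hg y hy)

theorem span_X_image_le_degreeOnIdeal :
    Ideal.span (X '' s) ≤ (degreeOnIdeal s 1 : Ideal (MvPolynomial σ R)) := by
  rw [Ideal.span_le]
  rintro _ ⟨i, hi, rfl⟩
  refine mem_degreeOnIdeal.mpr fun d hd => ?_
  rw [Finset.mem_singleton.mp (support_monomial_subset hd)]
  simpa using le_degreeOn hi (single i 1)

theorem span_X_image_pow_le_degreeOnIdeal (k : ℕ) :
    Ideal.span (X '' s) ^ k ≤ (degreeOnIdeal s k : Ideal (MvPolynomial σ R)) := by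
  induction k with
  | zero => exact fun f _ => mem_degreeOnIdeal.mpr fun d _ => Nat.zero_le _
  | succ k ih =>
    rw [pow_succ]
    exact (Ideal.mul_mono ih span_X_image_le_degreeOnIdeal).trans (degreeOnIdeal_mul_le k 1)

theorem monomial_mem_span_X_image_pow {d : σ →₀ ℕ} {k : ℕ} (c : R) (h : k ≤ degreeOn s d) :
    monomial d c ∈ Ideal.span (X '' s) ^ k := by
  induction k generalizing d with
  | zero => simp
  | succ k ih =>
    obtain ⟨i, hi, hdi⟩ := exists_mem_ne_zero_of_degreeOn_pos (by omega : 0 < degreeOn s d)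
    have hdeg := degreeOn_sub_single_add hi hdi
    rw [← sub_add_single_one_cancel hdi, ← mul_one c, ← monomial_mul, pow_succ]
    exact Ideal.mul_mem_mul (ih (by omega)) (Ideal.subset_span ⟨i, hi, rfl⟩)

theorem mem_span_X_image_pow_iff {k : ℕ} {f : MvPolynomial σ R} :
    f ∈ Ideal.span (X '' s) ^ k ↔ ∀ d ∈ f.support, k ≤ degreeOn s d := by
  refine ⟨fun h => mem_degreeOnIdeal.mp (span_X_image_pow_le_degreeOnIdeal k h), fun h => ?_⟩
  rw [f.as_sum]
  exact Ideal.sum_mem _ fun d hd => monomial_mem_span_X_image_pow _ (h d hd)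

theorem monomial_mem_span_X_image_pow_iff {d : σ →₀ ℕ} {k : ℕ} {c : R} (hc : c ≠ 0) :
    monomial d c ∈ Ideal.span (X '' s) ^ k ↔ k ≤ degreeOn s d := by
  classical
  simp [mem_span_X_image_pow_iff, support_monomial, hc]

theorem colon_span_X_image_pow_monomial (d : σ →₀ ℕ) (t : ℕ) :
    Submodule.colon (Ideal.span (X '' s : Set (MvPolynomial σ R)) ^ t)
        (Ideal.span {monomial d (1 : R)}) =
      Ideal.span (X '' s) ^ (t - degreeOn s d) := by
  ext f
  rw [Ideal.mem_colon_span_singleton]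
  constructor
  · intro h
    rw [mem_span_X_image_pow_iff] at h ⊢
    intro e he
    have hed : e + d ∈ (f * monomial d 1).support := by
      rw [mem_support_iff, coeff_mul_monomial, mul_one]
      exact mem_support_iff.mp he
    have hdeg := h _ hed
    rw [map_add] at hdeg
    omega
  · intro hf
    have hfd :=
      Ideal.mul_mem_mul hf (monomial_mem_span_X_image_pow (s := s) (d := d) (1 : R) le_rfl)
    rw [← pow_add] at hfd
    -- `t ≤ (t - degreeOn s d) + degreeOn s d` holds also when the subtraction truncates
    exact Ideal.pow_le_pow_right (by omega) hfd

theorem exists_X_mem_of_monomial_mem {p : Ideal (MvPolynomial σ R)} [p.IsPrime] {d : σ →₀ ℕ}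
    (h : monomial d 1 ∈ p) : ∃ i, d i ≠ 0 ∧ X i ∈ p := by
  rw [monomial_eq, map_one, one_mul] at h
  obtain ⟨i, hi, hXi⟩ := Ideal.IsPrime.prod_mem_iff.mp h
  exact ⟨i, Finsupp.mem_support_iff.mp hi, ‹p.IsPrime›.mem_of_pow_mem _ hXi⟩

end CommSemiring

section CommRing

variable [CommRing R] {s : Set σ}

theorem sub_aeval_indicator_X_mem_span_X_image (f : MvPolynomial σ R) :
    f - aeval (sᶜ.indicator X) f ∈ Ideal.span (X '' s) := by
  induction f using MvPolynomial.induction_on with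
  | C a => simp
  | add f g hf hg =>
    rw [map_add, add_sub_add_comm]
    exact add_mem hf hg
  | mul_X f i hf =>
    rw [map_mul, aeval_X]
    by_cases hi : i ∈ s
    · rw [Set.indicator_of_notMem (by simpa using hi), mul_zero, sub_zero]
      exact Ideal.mul_mem_left _ f (Ideal.subset_span ⟨i, hi, rfl⟩)
    · rw [Set.indicator_of_mem (by simpa using hi), ← sub_mul]
      exact Ideal.mul_mem_right _ _ hf

theorem ker_aeval_indicator_X :
    RingHom.ker (aeval (R := R) (sᶜ.indicator (X : σ → MvPolynomial σ R))) =
      Ideal.span (X '' s) := by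
  refine le_antisymm (fun f hf => ?_) (Ideal.span_le.mpr ?_)
  · have hsub := sub_aeval_indicator_X_mem_span_X_image (s := s) f
    rwa [RingHom.mem_ker.mp hf, sub_zero] at hsub
  · rintro _ ⟨i, hi, rfl⟩
    simp [Set.indicator_of_notMem (by simpa using hi : i ∉ sᶜ)]

theorem isPrime_span_X_image [IsDomain R] :
    (Ideal.span (X '' s : Set (MvPolynomial σ R))).IsPrime :=
  ker_aeval_indicator_X (R := R) (s := s) ▸ RingHom.ker_isPrime _

theorem eq_span_X_image_of_mem_minimalPrimes [IsDomain R] {S : Set (σ →₀ ℕ)}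
    {p : Ideal (MvPolynomial σ R)}
    (hp : p ∈ (Ideal.span ((monomial · (1 : R)) '' S)).minimalPrimes) :
    p = Ideal.span (X '' {i | X i ∈ p}) := by
  have hle : Ideal.span (X '' {i | X i ∈ p}) ≤ p :=
    Ideal.span_le.mpr (by rintro _ ⟨i, hi, rfl⟩; exact hi)
  refine le_antisymm (hp.2 ⟨isPrime_span_X_image, Ideal.span_le.mpr ?_⟩ hle) hle
  rintro _ ⟨d, hd, rfl⟩
  have : p.IsPrime := hp.1.1
  obtain ⟨i, hdi, hXi⟩ := exists_X_mem_of_monomial_mem (hp.1.2 (Ideal.subset_span ⟨d, hd, rfl⟩))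
  refine mem_ideal_span_X_image.mpr fun m hm => ⟨i, hXi, ?_⟩
  rwa [Finset.mem_singleton.mp (support_monomial_subset hm)]

end CommRing

end MvPolynomial

theorem stmt7_general {n : ℕ} {K : Type*} [Field K]
    (I : Ideal (MvPolynomial (Fin n) K)) (hI : IsSqFreeMonomialIdeal I)
    (ℓ : ℕ)
    (v : MvPolynomial (Fin n) K)
    (hvmono : ∃ d : Fin n →₀ ℕ, (∀ i, d i ≤ 1) ∧ v = monomial d (1 : K))
    (hmem : ∀ p ∈ I.minimalPrimes, v ∈ p ^ ℓ ∧ v ∉ p ^ (ℓ + 1)) :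
    ∀ p ∈ I.minimalPrimes, ∀ t : ℕ, ℓ < t →
      Submodule.colon (p ^ t) (Ideal.span {v}) = p ^ (t - ℓ) := by
  obtain ⟨S, -, rfl⟩ := hI
  obtain ⟨d, -, rfl⟩ := hvmono
  intro p hp t _
  obtain ⟨hv, hv'⟩ := hmem p hp
  rw [eq_span_X_image_of_mem_minimalPrimes hp] at hv hv' ⊢
  rw [monomial_mem_span_X_image_pow_iff one_ne_zero] at hv hv'
  rw [colon_span_X_image_pow_monomial, show Finsupp.degreeOn _ d = ℓ by omega]

/-- If `v ∈ I^ℓ` is a square-free monomial with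
`v ∈ 𝔭^ℓ \ 𝔭^{ℓ+1}` for every minimal prime `𝔭` of `I`, then
`(𝔭^t : v) = 𝔭^{t-ℓ}` for every minimal prime `𝔭` and `t > ℓ`. -/
theorem stmt7 {n : ℕ} {K : Type*} [Field K]
    (I : Ideal (MvPolynomial (Fin n) K)) (hI : IsSqFreeMonomialIdeal I)
    (ℓ : ℕ) (hℓ : 1 ≤ ℓ)
    (v : MvPolynomial (Fin n) K)
    (hvmono : ∃ d : Fin n →₀ ℕ, (∀ i, d i ≤ 1) ∧ v = monomial d (1 : K))
    (hv : v ∈ I ^ ℓ)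
    (hmem : ∀ p ∈ I.minimalPrimes, v ∈ p ^ ℓ ∧ v ∉ p ^ (ℓ + 1)) :
    ∀ p ∈ I.minimalPrimes, ∀ t : ℕ, ℓ < t →
      Submodule.colon (p ^ t) (Ideal.span {v}) = p ^ (t - ℓ) :=
  stmt7_general I hI ℓ v hvmono hmem
end

section
/- Let $I_1$ and $I_2$ be monomial ideals in $R = K[x_1,\ldots,x_n]$ with disjoint supports, i.e., no variable divides both a minimal generator of $I_1$ and a minimal generator of $I_2$. Then $I_1 + I_2$ satisfies the strong persistence property (i.e., $((I_1+I_2)^{s+1} : (I_1+I_2)) = (I_1+I_2)^s$ for all $s \ge 1$) if and only if $I_1$ or $I_2$ satisfies the strong persistence property. -/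
open MvPolynomial

/-- The strong persistence property: `(I^{s+1} : I) = I^s` for all `s ≥ 1`. -/
def StrongPersistence {n : ℕ} {K : Type*} [Field K]
    (I : Ideal (MvPolynomial (Fin n) K)) : Prop :=
  ∀ s : ℕ, 1 ≤ s → Submodule.colon (I ^ (s + 1)) I = I ^ s

/-!
Everything reduces to combinatorics of exponents. For `0 ∉ S` let `ord S d` be the largest `k`
with `x^d ∈ I_S^k`. Strong persistence of `I_S` fails exactly when some `d` is an obstruction:
`ord S (d + u) ≥ ord S d + 2` for every generator `u ∈ S`. If `S₁` and `S₂` involve disjoint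
sets of variables, then `ord (S₁ ∪ S₂) = ord S₁ + ord S₂`, and multiplying by a generator of one
ideal does not change the order with respect to the other, so `d` is an obstruction for the sum
iff it is one for both summands. As `ord Sᵢ d` only sees the variables of `Sᵢ`, an obstruction
for `S₁` and one for `S₂` glue to a common obstruction. Hence the sum fails strong persistence
iff both summands do.
-/

open scoped Pointwise

namespace Finsupp

variable {σ : Type*} {d d' e : σ →₀ ℕ}

lemma le_iff_of_eqOn {V : Set σ} (he : (e.support : Set σ) ⊆ V) (h : Set.EqOn d d' V) :
    e ≤ d ↔ e ≤ d' := by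
  refine forall_congr' fun i => ?_
  by_cases hi : i ∈ V
  · rw [h hi]
  · simp [notMem_support_iff.mp fun h => hi (he h)]

lemma add_le_of_disjoint {e₁ e₂ : σ →₀ ℕ} (h : Disjoint e₁.support e₂.support)
    (h₁ : e₁ ≤ d) (h₂ : e₂ ≤ d) : e₁ + e₂ ≤ d := by
  intro i
  by_cases hi : i ∈ e₁.support
  · simpa [notMem_support_iff.mp (Finset.disjoint_left.mp h hi)] using h₁ i
  · simpa [notMem_support_iff.mp hi] using h₂ i

end Finsupp

namespace MonomialIdeal

variable {σ : Type*} {S T : Set (σ →₀ ℕ)} {k : ℕ} {d d' u : σ →₀ ℕ}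

def vars (S : Set (σ →₀ ℕ)) : Set σ := ⋃ x ∈ S, (x.support : Set σ)

lemma disjoint_vars_iff :
    Disjoint (vars S) (vars T) ↔ ∀ x ∈ S, ∀ y ∈ T, Disjoint x.support y.support := by
  simp_rw [vars, Set.disjoint_iUnion₂_left, Set.disjoint_iUnion₂_right, Finset.disjoint_coe]

lemma support_subset_vars (hu : u ∈ S) : (u.support : Set σ) ⊆ vars S :=
  Set.subset_biUnion_of_mem (u := fun x : σ →₀ ℕ => (x.support : Set σ)) hu

lemma support_subset_vars_of_mem_nsmul : ∀ {k : ℕ} {e : σ →₀ ℕ}, e ∈ k • S →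
    (e.support : Set σ) ⊆ vars S
  | 0, e, he => by simp [Set.mem_zero.mp (zero_nsmul S ▸ he)]
  | k + 1, _, he => by
      classical
      obtain ⟨e', he', x, hx, rfl⟩ := Set.mem_add.mp (succ_nsmul S k ▸ he)
      refine (Finset.coe_subset.mpr Finsupp.support_add).trans ?_
      rw [Finset.coe_union]
      exact Set.union_subset (support_subset_vars_of_mem_nsmul he') (support_subset_vars hx)

lemma exists_le_of_mem_nsmul {k m : ℕ} (hkm : k ≤ m) (he : e ∈ m • S) : ∃ e' ∈ k • S, e' ≤ e := by
  obtain ⟨j, rfl⟩ := Nat.exists_eq_add_of_le hkm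
  obtain ⟨e', he', e'', -, rfl⟩ := Set.mem_add.mp (add_nsmul S k j ▸ he)
  exact ⟨e', he', le_self_add⟩

lemma le_degree_of_mem_nsmul (h0 : 0 ∉ S) : ∀ {k : ℕ} {e : σ →₀ ℕ}, e ∈ k • S → k ≤ e.degree
  | 0, _, _ => Nat.zero_le _
  | k + 1, _, he => by
      obtain ⟨e', he', x, hx, rfl⟩ := Set.mem_add.mp (succ_nsmul S k ▸ he)
      have hx0 : x.degree ≠ 0 := by
        rw [Ne, Finsupp.degree_eq_zero_iff]
        rintro rfl
        exact h0 hx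
      rw [map_add]
      have := le_degree_of_mem_nsmul h0 he'
      omega

lemma exists_of_mem_nsmul_union : ∀ {k : ℕ} {e : σ →₀ ℕ}, e ∈ k • (S ∪ T) →
    ∃ a b, a + b = k ∧ ∃ e₁ ∈ a • S, ∃ e₂ ∈ b • T, e₁ + e₂ = e
  | 0, e, he => ⟨0, 0, rfl, 0, by simp, 0, by simp,
      by simp [Set.mem_zero.mp (zero_nsmul (S ∪ T) ▸ he)]⟩
  | k + 1, _, he => by
      obtain ⟨e', he', x, hx, rfl⟩ := Set.mem_add.mp (succ_nsmul (S ∪ T) k ▸ he)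
      obtain ⟨a, b, rfl, e₁, he₁, e₂, he₂, rfl⟩ := exists_of_mem_nsmul_union he'
      rcases hx with hx | hx
      · exact ⟨a + 1, b, by omega, e₁ + x, succ_nsmul S a ▸ Set.add_mem_add he₁ hx, e₂, he₂,
          add_right_comm _ _ _⟩
      · exact ⟨a, b + 1, by omega, e₁, he₁, e₂ + x, succ_nsmul T b ▸ Set.add_mem_add he₂ hx,
          (add_assoc _ _ _).symm⟩

/-- `k • S` is the `k`-fold sumset `S + ⋯ + S`, so for `0 ∉ S` this is the largest `k` with
`x^d ∈ I_S^k`. For `0 ∈ S` the set is unbounded and `sSup` returns the junk value `0`. -/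
noncomputable def ord (S : Set (σ →₀ ℕ)) (d : σ →₀ ℕ) : ℕ := sSup {k | ∃ e ∈ k • S, e ≤ d}

lemma le_ord_iff (h0 : 0 ∉ S) : k ≤ ord S d ↔ ∃ e ∈ k • S, e ≤ d := by
  have hbdd : BddAbove {k | ∃ e ∈ k • S, e ≤ d} :=
    ⟨d.degree, fun k ⟨e, he, hed⟩ =>
      (le_degree_of_mem_nsmul h0 he).trans (Finsupp.degree_mono hed)⟩
  have hne : {k | ∃ e ∈ k • S, e ≤ d}.Nonempty := ⟨0, 0, by simp, zero_le⟩
  refine ⟨fun hk => ?_, fun hk => le_csSup hbdd hk⟩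
  obtain ⟨e, he, hed⟩ := Nat.sSup_mem hne hbdd
  obtain ⟨e', he', hee'⟩ := exists_le_of_mem_nsmul hk he
  exact ⟨e', he', hee'.trans hed⟩

lemma ord_congr (h : Set.EqOn d d' (vars S)) : ord S d = ord S d' := by
  unfold ord
  congr 1
  exact Set.ext fun k => exists_congr fun e => and_congr_right fun he =>
    Finsupp.le_iff_of_eqOn (support_subset_vars_of_mem_nsmul he) h

lemma ord_add_of_disjoint_vars (hST : Disjoint (vars S) (vars T)) (hu : u ∈ S) :
    ord T (d + u) = ord T d := by
  refine ord_congr fun i hi => ?_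
  have : i ∉ u.support := fun h => Set.disjoint_left.mp hST (support_subset_vars hu h) hi
  simp [Finsupp.notMem_support_iff.mp this]

lemma ord_union (hST : Disjoint (vars S) (vars T)) (hS : 0 ∉ S) (hT : 0 ∉ T) :
    ord (S ∪ T) d = ord S d + ord T d := by
  have hST0 : (0 : σ →₀ ℕ) ∉ S ∪ T := by simp [hS, hT]
  apply le_antisymm
  · obtain ⟨e, he, hed⟩ := (le_ord_iff (d := d) hST0).mp le_rfl
    obtain ⟨a, b, hab, e₁, he₁, e₂, he₂, rfl⟩ := exists_of_mem_nsmul_union he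
    have ha := (le_ord_iff hS).mpr ⟨e₁, he₁, le_self_add.trans hed⟩
    have hb := (le_ord_iff hT).mpr ⟨e₂, he₂, le_add_self.trans hed⟩
    omega
  · obtain ⟨e₁, he₁, hed₁⟩ := (le_ord_iff (d := d) hS).mp le_rfl
    obtain ⟨e₂, he₂, hed₂⟩ := (le_ord_iff (d := d) hT).mp le_rfl
    have hdisj : Disjoint e₁.support e₂.support := by
      rw [← Finset.disjoint_coe]
      exact hST.mono (support_subset_vars_of_mem_nsmul he₁) (support_subset_vars_of_mem_nsmul he₂)
    refine (le_ord_iff hST0).mpr ⟨e₁ + e₂, ?_, Finsupp.add_le_of_disjoint hdisj hed₁ hed₂⟩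
    rw [add_nsmul]
    exact Set.add_mem_add (Set.nsmul_subset_nsmul_left Set.subset_union_left he₁)
      (Set.nsmul_subset_nsmul_left Set.subset_union_right he₂)

lemma ord_add_one_le_ord_add (h0 : 0 ∉ S) (hu : u ∈ S) : ord S d + 1 ≤ ord S (d + u) := by
  obtain ⟨e, he, hed⟩ := (le_ord_iff (d := d) h0).mp le_rfl
  exact (le_ord_iff h0).mpr ⟨e + u, succ_nsmul S _ ▸ Set.add_mem_add he hu, add_le_add_left hed u⟩

def IsObstruction (S : Set (σ →₀ ℕ)) (d : σ →₀ ℕ) : Prop :=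
  ∀ u ∈ S, ord S d + 2 ≤ ord S (d + u)

lemma not_exists_isObstruction_iff (h0 : 0 ∉ S) :
    (¬∃ d, IsObstruction S d) ↔
      ∀ s, 1 ≤ s → ∀ d, (∀ u ∈ S, s + 1 ≤ ord S (d + u)) ↔ s ≤ ord S d := by
  refine ⟨fun h s _ d => ⟨fun hd => ?_, fun hs u hu => ?_⟩, fun h ⟨d, hd⟩ => ?_⟩
  · by_contra hlt
    exact h ⟨d, fun u hu => by have := hd u hu; omega⟩
  · have := ord_add_one_le_ord_add (d := d) h0 hu
    omega
  · have := (h (ord S d + 1) le_add_self d).mp fun u hu => hd u hu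
    omega

lemma isObstruction_congr (h : Set.EqOn d d' (vars S)) :
    IsObstruction S d ↔ IsObstruction S d' := by
  refine forall₂_congr fun u _ => ?_
  rw [ord_congr h, ord_congr (d := d + u) (d' := d' + u) fun i hi => by simp [h hi]]

lemma isObstruction_union_iff (hST : Disjoint (vars S) (vars T)) (hS : 0 ∉ S) (hT : 0 ∉ T) :
    IsObstruction (S ∪ T) d ↔ IsObstruction S d ∧ IsObstruction T d := by
  simp only [IsObstruction, Set.mem_union, or_imp, forall_and, ord_union hST hS hT]
  refine and_congr (forall₂_congr fun u hu => ?_) (forall₂_congr fun u hu => ?_)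
  · rw [ord_add_of_disjoint_vars hST hu]; omega
  · rw [ord_add_of_disjoint_vars hST.symm hu]; omega

lemma exists_isObstruction_union_iff (hST : Disjoint (vars S) (vars T)) (hS : 0 ∉ S)
    (hT : 0 ∉ T) :
    (∃ d, IsObstruction (S ∪ T) d) ↔ (∃ d, IsObstruction S d) ∧ ∃ d, IsObstruction T d := by
  simp only [isObstruction_union_iff hST hS hT]
  refine ⟨fun ⟨d, hS, hT⟩ => ⟨⟨d, hS⟩, ⟨d, hT⟩⟩, fun ⟨⟨d₁, h₁⟩, ⟨d₂, h₂⟩⟩ => ?_⟩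
  classical
  let d := d₁.filter (· ∈ vars S) + d₂.filter (· ∉ vars S)
  refine ⟨d, (isObstruction_congr fun i hi => ?_).mpr h₁,
    (isObstruction_congr fun i hi => ?_).mpr h₂⟩
  · simp [d, hi]
  · simp [d, Set.disjoint_right.mp hST hi]

end MonomialIdeal

namespace MvPolynomial

variable {σ R : Type*} [CommSemiring R] {S T : Set (σ →₀ ℕ)}

variable (R) in
noncomputable def monomialIdeal (S : Set (σ →₀ ℕ)) : Ideal (MvPolynomial σ R) :=
  Ideal.span ((fun d => monomial d (1 : R)) '' S)

lemma monomialIdeal_union : monomialIdeal R S ⊔ monomialIdeal R T = monomialIdeal R (S ∪ T) := by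
  rw [monomialIdeal, monomialIdeal, monomialIdeal, Set.image_union, Ideal.span_union]

lemma monomialIdeal_mul : monomialIdeal R S * monomialIdeal R T = monomialIdeal R (S + T) := by
  rw [monomialIdeal, monomialIdeal, monomialIdeal, Ideal.span_mul_span', ← Set.image2_mul,
    Set.image2_image_left, Set.image2_image_right, ← Set.image2_add, Set.image_image2]
  simp only [monomial_mul, one_mul]

lemma monomialIdeal_eq_top (h0 : 0 ∈ S) : monomialIdeal R S = ⊤ :=
  (Ideal.eq_top_iff_one _).mpr <| by
    rw [← C_1, ← monomial_zero']
    exact Ideal.subset_span ⟨0, h0, rfl⟩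

lemma monomialIdeal_pow : ∀ k : ℕ, monomialIdeal R S ^ k = monomialIdeal R (k • S)
  | 0 => by rw [pow_zero, Ideal.one_eq_top, monomialIdeal_eq_top (by simp)]
  | k + 1 => by rw [pow_succ, monomialIdeal_pow k, monomialIdeal_mul, succ_nsmul]

lemma mem_monomialIdeal {f : MvPolynomial σ R} :
    f ∈ monomialIdeal R S ↔ ∀ c ∈ f.support, ∃ e ∈ S, e ≤ c :=
  mem_ideal_span_monomial_image

lemma mem_colon_monomialIdeal {f : MvPolynomial σ R} :
    f ∈ (monomialIdeal R T).colon (monomialIdeal R S) ↔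
      ∀ c ∈ f.support, ∀ u ∈ S, ∃ e ∈ T, e ≤ c + u := by
  simp only [monomialIdeal, Ideal.colon_span, Submodule.mem_colon, Set.forall_mem_image,
    smul_eq_mul, mem_ideal_span_monomial_image]
  refine ⟨fun h c hc u hu => h hu (c + u) ?_, fun h u hu c' hc' => ?_⟩
  · rwa [mem_support_iff, coeff_mul_monomial, mul_one, ← mem_support_iff]
  · rw [mem_support_iff, coeff_mul_monomial', mul_one] at hc'
    split_ifs at hc' with hle
    · obtain ⟨e, he, hle'⟩ := h (c' - u) (mem_support_iff.mpr hc') u hu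
      exact ⟨e, he, tsub_add_cancel_of_le hle ▸ hle'⟩
    · exact absurd rfl hc'

lemma forall_mem_support_iff_iff [Nontrivial R] {P Q : (σ →₀ ℕ) → Prop} :
    (∀ f : MvPolynomial σ R, (∀ c ∈ f.support, P c) ↔ ∀ c ∈ f.support, Q c) ↔
      ∀ c, P c ↔ Q c := by
  refine ⟨fun h c => ?_, fun h f => forall₂_congr fun c _ => h c⟩
  classical
  simpa only [support_monomial, if_neg one_ne_zero, Finset.mem_singleton, forall_eq] using
    h (monomial c 1)

end MvPolynomial

open MonomialIdeal

lemma strongPersistence_top {n : ℕ} {K : Type*} [Field K] :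
    StrongPersistence (⊤ : Ideal (MvPolynomial (Fin n) K)) := fun s _ => by
  rw [Ideal.top_pow, Ideal.top_pow, Submodule.top_colon]

lemma strongPersistence_monomialIdeal_iff {n : ℕ} {K : Type*} [Field K] {S : Set (Fin n →₀ ℕ)}
    (h0 : 0 ∉ S) : StrongPersistence (monomialIdeal K S) ↔ ¬∃ d, IsObstruction S d := by
  rw [not_exists_isObstruction_iff h0]
  refine forall₂_congr fun s _ => ?_
  simp only [monomialIdeal_pow, SetLike.ext_iff, mem_colon_monomialIdeal, mem_monomialIdeal,
    ← le_ord_iff h0]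
  exact forall_mem_support_iff_iff

/-- For monomial ideals `I₁, I₂` with disjoint supports, `I₁ + I₂` has the
strong persistence property iff `I₁` or `I₂` does. -/
theorem stmt9 {n : ℕ} {K : Type*} [Field K]
    (I₁ I₂ : Ideal (MvPolynomial (Fin n) K))
    (S₁ S₂ : Set (Fin n →₀ ℕ))
    (h₁ : I₁ = Ideal.span ((fun d => (monomial d (1 : K) : MvPolynomial (Fin n) K)) '' S₁))
    (h₂ : I₂ = Ideal.span ((fun d => (monomial d (1 : K) : MvPolynomial (Fin n) K)) '' S₂))
    (hdisj : ∀ d₁ ∈ S₁, ∀ d₂ ∈ S₂, Disjoint d₁.support d₂.support) :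
    StrongPersistence (I₁ + I₂) ↔ StrongPersistence I₁ ∨ StrongPersistence I₂ := by
  obtain rfl : I₁ = monomialIdeal K S₁ := h₁
  obtain rfl : I₂ = monomialIdeal K S₂ := h₂
  by_cases h0₁ : 0 ∈ S₁
  · simp [monomialIdeal_eq_top h0₁, strongPersistence_top]
  by_cases h0₂ : 0 ∈ S₂
  · simp [monomialIdeal_eq_top h0₂, strongPersistence_top]
  rw [Submodule.add_eq_sup, monomialIdeal_union, strongPersistence_monomialIdeal_iff h0₁,
    strongPersistence_monomialIdeal_iff h0₂,
    strongPersistence_monomialIdeal_iff (by simp [h0₁, h0₂]),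
    exists_isObstruction_union_iff (disjoint_vars_iff.mpr hdisj) h0₁ h0₂, not_and_or]
end

section
/- Let $G$ be a bipartite graph on vertices $x_1,\ldots,x_n$ with edge ideal $I = (u_1,\ldots,u_t,u_{t+1}) \subset K[x_1,\ldots,x_n]$, and set $J = (u_1,\ldots,u_t)$. Then $I^r J^s = I^{r+s} \cap J^s$ for all integers $r, s \ge 0$. -/
/-!
Both ideals are monomial ideals, so the inclusion `I^{r+s} ∩ J^s ⊆ I^r J^s` is a statement about
an exponent vector `d`: if `r + s` edges of `G` and, separately, `s` edges of `G - e` (counted with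
multiplicity) have degree vectors bounded by `d`, then so do `r` edges of `G` and `s` edges of
`G - e` together. Equivalently, some `r + s` edges of `G` bounded by `d` use `e = αβ` at most `r`
times.

Replacing each vertex `x` by `d x` slots, a multigraph bounded by `d` on the bipartite graph `G` is
a matching between the slots of the two colour classes; the cap on `e` is imposed by letting only
the first `r` slots of `α` be joined to `β`. Hall's theorem with deficiency produces a matching of
size `r + s` as soon as every vertex cover of `G` has `d`-weight at least `r + s` and every vertex
cover of `G - e` has `d`-weight at least `s`, and the two given edge multisets show exactly that.
-/

open MvPolynomial Finset

theorem Finset.card_biUnion_add_card_le {ι α β : Type*} [DecidableEq α] [DecidableEq β] [Fintype β]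
    (t : ι → Finset α) {S : Finset ι} (hS : S.Nonempty) :
    #(S.biUnion t) + Fintype.card β ≤ #(S.biUnion fun i => (t i).disjSum (univ : Finset β)) := by
  obtain ⟨i₀, hi₀⟩ := hS
  rw [← card_univ, ← card_disjSum]
  refine card_le_card ?_
  rintro (a | b) hz
  · obtain ⟨i, hi, ha⟩ := mem_biUnion.1 (inl_mem_disjSum.1 hz)
    exact mem_biUnion.2 ⟨i, hi, inl_mem_disjSum.2 ha⟩
  · exact mem_biUnion.2 ⟨i₀, hi₀, inr_mem_disjSum.2 (mem_univ b)⟩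

theorem Finset.exists_matching_of_injective_disjSum {ι α β : Type*} [DecidableEq α]
    [DecidableEq β] [Fintype β] {L : Finset ι} {t : ι → Finset α} {f : L → α ⊕ β}
    (hf_inj : Function.Injective f) (hf_mem : ∀ i : L, f i ∈ (t i).disjSum univ) :
    ∃ m : Finset (ι × α), #L ≤ #m + Fintype.card β ∧ (∀ p ∈ m, p.1 ∈ L ∧ p.2 ∈ t p.1) ∧
      Set.InjOn Prod.fst (m : Set (ι × α)) ∧ Set.InjOn Prod.snd (m : Set (ι × α)) := by
  classical
  let m : Finset (ι × α) :=
    (L ×ˢ L.biUnion t).filter fun p => ∃ h : p.1 ∈ L, f ⟨p.1, h⟩ = .inl p.2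
  have hm : ∀ p ∈ m, ∃ h : p.1 ∈ L, f ⟨p.1, h⟩ = .inl p.2 := fun p hp => (mem_filter.1 hp).2
  have hm_mem : ∀ (i : L) (a : α), f i = .inl a → (i.1, a) ∈ m := by
    intro i a hfi
    have ha : a ∈ t i := by simpa [hfi] using hf_mem i
    exact mem_filter.2 ⟨mem_product.2 ⟨i.2, mem_biUnion.2 ⟨i, i.2, ha⟩⟩, i.2, hfi⟩
  refine ⟨m, ?_, fun p hp => ?_, fun p hp q hq hpq => ?_, fun p hp q hq hpq => ?_⟩
  · have himage : univ.image f ⊆ m.image (Sum.inl ∘ Prod.snd) ∪ univ.image Sum.inr := by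
      intro z hz
      obtain ⟨i, -, rfl⟩ := mem_image.1 hz
      rcases hfi : f i with a | j
      · exact mem_union_left _ (mem_image.2 ⟨(i.1, a), hm_mem i a hfi, rfl⟩)
      · exact mem_union_right _ (mem_image.2 ⟨j, mem_univ _, rfl⟩)
    calc #L = #(univ.image f) := by
          rw [card_image_of_injective _ hf_inj, card_univ, Fintype.card_coe]
      _ ≤ #(m.image (Sum.inl ∘ Prod.snd)) + #(univ.image (Sum.inr : β → α ⊕ β)) :=
        (card_le_card himage).trans (card_union_le _ _)
      _ ≤ #m + Fintype.card β := add_le_add card_image_le (card_image_le.trans_eq card_univ)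
  · obtain ⟨hpL, hfp⟩ := hm p hp
    have := hf_mem ⟨p.1, hpL⟩
    rw [hfp] at this
    exact ⟨hpL, inl_mem_disjSum.1 this⟩
  · obtain ⟨hpL, hfp⟩ := hm p hp
    obtain ⟨hqL, hfq⟩ := hm q hq
    have : f ⟨p.1, hpL⟩ = f ⟨q.1, hqL⟩ := by simp only [hpq]
    exact Prod.ext hpq (Sum.inl_injective (hfp.symm.trans (this.trans hfq)))
  · obtain ⟨hpL, hfp⟩ := hm p hp
    obtain ⟨hqL, hfq⟩ := hm q hq
    have := congrArg Subtype.val (hf_inj (hfp.trans ((congrArg Sum.inl hpq).trans hfq.symm)))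
    exact Prod.ext this hpq

theorem Finset.exists_matching_of_card_add_le {ι α : Type*} [DecidableEq α]
    (L : Finset ι) (t : ι → Finset α) (k : ℕ)
    (h : ∀ S ⊆ L, #S + k ≤ #(S.biUnion t) + #L) :
    ∃ m : Finset (ι × α), k ≤ #m ∧ (∀ p ∈ m, p.1 ∈ L ∧ p.2 ∈ t p.1) ∧
      Set.InjOn Prod.fst (m : Set (ι × α)) ∧ Set.InjOn Prod.snd (m : Set (ι × α)) := by
  classical
  have hk : k ≤ #L := by simpa using h ∅ (empty_subset L)
  -- Adding `#L - k` vertices adjacent to every `i ∈ L` turns the hypothesis into Hall's condition.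
  have hall : ∀ S : Finset L,
      #S ≤ #(S.biUnion fun i => (t i).disjSum (univ : Finset (Fin (#L - k)))) := by
    intro S
    rcases S.eq_empty_or_nonempty with rfl | hS
    · simp
    have h₁ := h (S.image Subtype.val) fun _ hx => by
      obtain ⟨i, -, rfl⟩ := mem_image.1 hx
      exact i.2
    have h₂ := card_biUnion_add_card_le (β := Fin (#L - k)) (fun i : L => t i) hS
    rw [card_image_of_injective _ Subtype.val_injective, image_biUnion] at h₁
    rw [Fintype.card_fin] at h₂
    omega
  obtain ⟨f, hf_inj, hf_mem⟩ := (all_card_le_biUnion_card_iff_exists_injective _).1 hall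
  obtain ⟨m, hm_card, hm⟩ := exists_matching_of_injective_disjSum hf_inj hf_mem
  rw [Fintype.card_fin] at hm_card
  exact ⟨m, by omega, hm⟩

theorem Multiset.exists_le_card_eq {α : Type*} {M : Multiset α} {k : ℕ}
    (hk : k ≤ M.card) : ∃ N ≤ M, N.card = k := by
  obtain ⟨N, hN⟩ := Multiset.exists_mem_of_ne_zero <| Multiset.card_pos.1 <| by
    rw [Multiset.card_powersetCard]; exact Nat.choose_pos hk
  exact ⟨N, Multiset.mem_powersetCard.1 hN⟩

theorem Multiset.exists_add_eq_of_card_filter_not_le {α : Type*} [DecidableEq α]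
    {M : Multiset α} {P : α → Prop} [DecidablePred P] {r s : ℕ} (hM : M.card = r + s)
    (hP : (M.filter fun a => ¬P a).card ≤ r) :
    ∃ M₁ M₂, M₁ + M₂ = M ∧ M₁.card = r ∧ M₂.card = s ∧ ∀ a ∈ M₂, P a := by
  have hsplit := congrArg Multiset.card (Multiset.filter_add_not P M)
  rw [Multiset.card_add] at hsplit
  obtain ⟨M₂, hM₂, hcard⟩ := Multiset.exists_le_card_eq (M := M.filter P) (k := s) (by omega)
  have hM₂M : M₂ ≤ M := hM₂.trans (Multiset.filter_le P M)
  refine ⟨M - M₂, M₂, tsub_add_cancel_of_le hM₂M, ?_, hcard,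
    fun a ha => (Multiset.mem_filter.1 (Multiset.mem_of_le hM₂ ha)).2⟩
  have := congrArg Multiset.card (tsub_add_cancel_of_le hM₂M)
  rw [Multiset.card_add] at this
  omega

namespace EdgeIdeal

section DegreeVector

variable {V : Type*}

noncomputable def degVec (M : Multiset (V × V)) : V →₀ ℕ :=
  (M.map fun p => Finsupp.single p.1 1 + Finsupp.single p.2 1).sum

@[simp] theorem degVec_zero : degVec (0 : Multiset (V × V)) = 0 := by
  simp [degVec]

@[simp] theorem degVec_cons (p : V × V) (M : Multiset (V × V)) :
    degVec (p ::ₘ M) = Finsupp.single p.1 1 + Finsupp.single p.2 1 + degVec M := by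
  simp [degVec]

@[simp] theorem degVec_add (M N : Multiset (V × V)) : degVec (M + N) = degVec M + degVec N := by
  simp [degVec]

theorem degVec_mono {M N : Multiset (V × V)} (h : M ≤ N) : degVec M ≤ degVec N := by
  obtain ⟨P, rfl⟩ := Multiset.le_iff_exists_add.1 h
  simp

theorem degVec_apply [DecidableEq V] (M : Multiset (V × V)) (x : V) :
    degVec M x = (M.filter (·.1 = x)).card + (M.filter (·.2 = x)).card := by
  induction M using Multiset.induction_on with
  | empty => simp
  | cons p M ih =>
    simp only [degVec_cons, Finsupp.add_apply, Finsupp.single_apply, ih, Multiset.filter_cons,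
      Multiset.card_add]
    split_ifs <;> simp_all <;> omega

theorem card_le_sum_of_isVertexCover {G : SimpleGraph V} {C : Finset V}
    (hC : G.IsVertexCover C) {M : Multiset (V × V)} (hM : ∀ p ∈ M, G.Adj p.1 p.2) {d : V →₀ ℕ}
    (hd : degVec M ≤ d) : M.card ≤ ∑ x ∈ C, d x := by
  classical
  refine le_trans ?_ (sum_le_sum fun x _ => hd x)
  clear hd
  induction M using Multiset.induction_on with
  | empty => simp
  | cons p M ih =>
    have hp : 1 ≤ ∑ x ∈ C, (Finsupp.single p.1 1 + Finsupp.single p.2 1 : V →₀ ℕ) x := by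
      simp only [Finsupp.add_apply, sum_add_distrib, Finsupp.single_apply, sum_ite_eq]
      rcases hC (hM p (Multiset.mem_cons_self _ _)) with h | h <;>
        simp only [mem_coe] at h <;> split_ifs <;> omega
    have := ih fun q hq => hM q (Multiset.mem_cons_of_mem hq)
    simp only [degVec_cons, Finsupp.add_apply, sum_add_distrib, Multiset.card_cons] at hp ⊢
    omega

end DegreeVector

section Slots

variable {V : Type*}

/-- `⟨x, i⟩` is the `i`-th copy of the vertex `x`. -/
abbrev Slot (V : Type*) := Σ _ : V, ℕ

def slots (X : Finset V) (d : V → ℕ) : Finset (Slot V) := X.sigma fun x => range (d x)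

@[simp] theorem mem_slots {X : Finset V} {d : V → ℕ} {q : Slot V} :
    q ∈ slots X d ↔ q.1 ∈ X ∧ q.2 < d q.1 := by
  simp [slots]

theorem card_slots (X : Finset V) (d : V → ℕ) : #(slots X d) = ∑ x ∈ X, d x := by
  simp [slots]

theorem biUnion_slots [DecidableEq V] {ι : Type*} (S : Finset ι) (A : ι → Finset V)
    (d : V → ℕ) : S.biUnion (fun i => slots (A i) d) = slots (S.biUnion A) d := by
  ext
  simp only [mem_biUnion, mem_slots]
  exact ⟨fun ⟨i, hi, hq, hd⟩ => ⟨⟨i, hi, hq⟩, hd⟩, fun ⟨⟨i, hi, hq⟩, hd⟩ => ⟨i, hi, hq, hd⟩⟩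

theorem subset_slots_image_fst [DecidableEq V] {S : Finset (Slot V)} {X : Finset V}
    {d : V → ℕ} (hS : S ⊆ slots X d) : S ⊆ slots (S.image Sigma.fst) d :=
  fun _ hq => mem_slots.2 ⟨mem_image_of_mem _ hq, (mem_slots.1 (hS hq)).2⟩

theorem card_add_le_sum_image_fst [DecidableEq V] {S : Finset (Slot V)} {X : Finset V}
    {d : V → ℕ} {α : V} {r : ℕ} (hS : S ⊆ slots X d) (hα : α ∈ S.image Sigma.fst)
    (hlow : ∀ q ∈ S, q.1 = α → r ≤ q.2) : #S + r ≤ ∑ x ∈ S.image Sigma.fst, d x := by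
  have hrα : r < d α := by
    obtain ⟨q₀, hq₀, rfl⟩ := mem_image.1 hα
    exact (hlow q₀ hq₀ rfl).trans_lt (mem_slots.1 (hS hq₀)).2
  have hdisj : Disjoint S (slots {α} fun _ => r) := by
    refine disjoint_left.2 fun q hq hq' => ?_
    obtain ⟨hqα, hqr⟩ := mem_slots.1 hq'
    exact absurd (hlow q hq (mem_singleton.1 hqα)) (not_le.2 hqr)
  have hsub : S ∪ (slots {α} fun _ => r) ⊆ slots (S.image Sigma.fst) d := by
    refine union_subset (subset_slots_image_fst hS) fun q hq => ?_
    obtain ⟨x, i⟩ := q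
    obtain ⟨hqα, hqr⟩ := mem_slots.1 hq
    obtain rfl : x = α := mem_singleton.1 hqα
    exact mem_slots.2 ⟨hα, hqr.trans hrα⟩
  have := card_le_card hsub
  rwa [card_union_of_disjoint hdisj, card_slots, card_slots, sum_singleton] at this

theorem card_le_of_injOn_slots {β : Type*} {s : Finset β} {g : β → Slot V} {x : V}
    {d : V → ℕ} (hg : Set.InjOn g s) (hs : ∀ b ∈ s, g b ∈ slots {x} d) : #s ≤ d x := by
  simpa [card_slots] using card_le_card_of_injOn g hs hg

theorem degVec_map_le_of_injOn [DecidableEq V] {m : Finset (Slot V × Slot V)} {d : V →₀ ℕ}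
    {c : V → Bool} {b₀ : Bool} (hfst : Set.InjOn Prod.fst (m : Set (Slot V × Slot V)))
    (hsnd : Set.InjOn Prod.snd (m : Set (Slot V × Slot V)))
    (hm : ∀ p ∈ m, p.1.2 < d p.1.1 ∧ p.2.2 < d p.2.1 ∧ c p.1.1 = b₀ ∧ c p.2.1 ≠ b₀) :
    degVec (m.val.map fun p => (p.1.1, p.2.1)) ≤ d := by
  refine Finsupp.le_def.2 fun x => ?_
  simp only [degVec_apply, Multiset.filter_map, Multiset.card_map, ← filter_val, card_val,
    Function.comp_def]
  by_cases hx : c x = b₀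
  · have hsnd_x : m.filter (fun p => p.2.1 = x) = ∅ :=
      filter_eq_empty_iff.2 fun p hp hpx => (hm p hp).2.2.2 (hpx ▸ hx)
    rw [hsnd_x, card_empty, add_zero]
    refine card_le_of_injOn_slots (hfst.mono (coe_subset.2 (filter_subset _ _))) fun p hp => ?_
    obtain ⟨hpm, rfl⟩ := mem_filter.1 hp
    exact mem_slots.2 ⟨mem_singleton_self _, (hm p hpm).1⟩
  · have hfst_x : m.filter (fun p => p.1.1 = x) = ∅ :=
      filter_eq_empty_iff.2 fun p hp hpx => hx (hpx ▸ (hm p hp).2.2.1)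
    rw [hfst_x, card_empty, zero_add]
    refine card_le_of_injOn_slots (hsnd.mono (coe_subset.2 (filter_subset _ _))) fun p hp => ?_
    obtain ⟨hpm, rfl⟩ := mem_filter.1 hp
    exact mem_slots.2 ⟨mem_singleton_self _, (hm p hpm).2.1⟩

end Slots

section CappedMatching

variable {V : Type*} {G : SimpleGraph V} {c : V → Bool}

theorem isVertexCover_of_color_eq (hc : ∀ a b, G.Adj a b → c a ≠ c b) {C : Set V} (b₀ : Bool)
    (h : ∀ a b, G.Adj a b → c a = b₀ → a ∈ C ∨ b ∈ C) : G.IsVertexCover C := by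
  intro a b hab
  by_cases ha : c a = b₀
  · exact h a b hab ha
  · have hb : c b = b₀ := by
      have := hc a b hab
      revert ha this
      cases c a <;> cases c b <;> cases b₀ <;> simp
    exact (h b a hab.symm hb).symm

variable [Fintype V] [DecidableEq V] {α β : V} {r s : ℕ}

variable (G α β r) in
/-- Only the first `r` slots of `α` may be joined to `β`: this caps the multiplicity of the edge
`αβ` at `r`. -/
def cappedNbrs [DecidableRel G.Adj] (q : Slot V) : Finset V :=
  univ.filter fun y => G.Adj q.1 y ∧ (q.1 = α → y = β → q.2 < r)

variable (G c α β r) in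
/-- The vertex cover dual to a set `S` of slots of the colour class of `α`. -/
def cappedCut [DecidableRel G.Adj] (S : Finset (Slot V)) : Finset V :=
  (univ.filter (c · = c α) \ S.image Sigma.fst) ∪ S.biUnion (cappedNbrs G α β r)

section Cut

variable [DecidableRel G.Adj] {S : Finset (Slot V)}

theorem mem_cappedCut_of_not_mem {a : V} (ha : c a = c α) (haS : a ∉ S.image Sigma.fst) :
    a ∈ cappedCut G c α β r S :=
  mem_union_left _ (mem_sdiff.2 ⟨mem_filter.2 ⟨mem_univ _, ha⟩, haS⟩)

theorem mem_cappedCut_of_adj {q : Slot V} (hq : q ∈ S) {y : V} (hy : G.Adj q.1 y)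
    (hcap : q.1 = α → y = β → q.2 < r) : y ∈ cappedCut G c α β r S :=
  mem_union_right _ (mem_biUnion.2 ⟨q, hq, mem_filter.2 ⟨mem_univ _, hy, hcap⟩⟩)

theorem sum_cappedCut_le (d : V → ℕ) : ∑ x ∈ cappedCut G c α β r S, d x ≤
    ∑ x ∈ univ.filter (c · = c α) \ S.image Sigma.fst, d x +
      ∑ x ∈ S.biUnion (cappedNbrs G α β r), d x := by
  rw [cappedCut, ← sum_union_inter]
  exact Nat.le_add_right _ _

theorem isVertexCover_cappedCut (hc : ∀ a b, G.Adj a b → c a ≠ c b)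
    (hS : β ∈ S.biUnion (cappedNbrs G α β r) ∨ α ∉ S.image Sigma.fst) :
    G.IsVertexCover (cappedCut G c α β r S) := by
  refine isVertexCover_of_color_eq hc (c α) fun a b hab ha => ?_
  by_cases haS : a ∈ S.image Sigma.fst
  · obtain ⟨q, hq, rfl⟩ := mem_image.1 haS
    by_cases hcap : q.1 = α → b = β → q.2 < r
    · exact Or.inr (mem_cappedCut_of_adj hq hab hcap)
    · obtain ⟨rfl, rfl, -⟩ : q.1 = α ∧ b = β ∧ ¬q.2 < r := by tauto
      exact Or.inr (mem_union_right _ (hS.resolve_right (not_not.2 haS)))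
  · exact Or.inl (mem_cappedCut_of_not_mem ha haS)

theorem isVertexCover_deleteEdges_cappedCut (hc : ∀ a b, G.Adj a b → c a ≠ c b) :
    (G.deleteEdges {s(α, β)}).IsVertexCover (cappedCut G c α β r S) := by
  refine isVertexCover_of_color_eq (G := G.deleteEdges _)
    (fun a b hab => hc a b (G.deleteEdges_le _ hab)) (c α) fun a b hab ha => ?_
  rw [SimpleGraph.deleteEdges_adj] at hab
  by_cases haS : a ∈ S.image Sigma.fst
  · obtain ⟨q, hq, rfl⟩ := mem_image.1 haS
    refine Or.inr (mem_cappedCut_of_adj hq hab.1 fun hqα hbβ => ?_)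
    simp [hqα, hbβ] at hab
  · exact Or.inl (mem_cappedCut_of_not_mem ha haS)

end Cut

theorem card_add_le_card_biUnion_cappedNbrs [DecidableRel G.Adj] {d : V → ℕ}
    (hc : ∀ a b, G.Adj a b → c a ≠ c b) (hαβ : G.Adj α β)
    (hG : ∀ C : Finset V, G.IsVertexCover C → r + s ≤ ∑ x ∈ C, d x)
    (hH : ∀ C : Finset V, (G.deleteEdges {s(α, β)}).IsVertexCover C → s ≤ ∑ x ∈ C, d x)
    {S : Finset (Slot V)} (hS : S ⊆ slots (univ.filter (c · = c α)) d) :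
    #S + (r + s) ≤ #(S.biUnion fun q => slots (cappedNbrs G α β r q) d) +
      #(slots (univ.filter (c · = c α)) d) := by
  rw [biUnion_slots, card_slots, card_slots]
  have hSd : #S ≤ ∑ x ∈ S.image Sigma.fst, d x := by
    simpa [card_slots] using card_le_card (subset_slots_image_fst hS)
  have hB := sum_sdiff (f := d) (s₁ := S.image Sigma.fst) fun x hx => by
    obtain ⟨q, hq, rfl⟩ := mem_image.1 hx
    exact (mem_slots.1 (hS hq)).1
  have hcut := sum_cappedCut_le (c := c) (G := G) (α := α) (β := β) (r := r) (S := S) d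
  by_cases hβ : β ∈ S.biUnion (cappedNbrs G α β r) ∨ α ∉ S.image Sigma.fst
  · have := hG _ (isVertexCover_cappedCut hc hβ)
    omega
  · obtain ⟨hβS, hαS⟩ : β ∉ S.biUnion (cappedNbrs G α β r) ∧ α ∈ S.image Sigma.fst := by tauto
    have := hH _ (isVertexCover_deleteEdges_cappedCut (r := r) (S := S) hc)
    -- the first `r` slots of `α` are joined to `β`, so none of them lies in `S`
    have hSr := card_add_le_sum_image_fst hS hαS fun q hq hqα => by
      by_contra! h
      exact hβS (mem_biUnion.2 ⟨q, hq, mem_filter.2 ⟨mem_univ _, hqα ▸ hαβ, fun _ _ => h⟩⟩)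
    omega

theorem exists_multiset_of_cover_bounds (hc : ∀ a b, G.Adj a b → c a ≠ c b)
    (hαβ : G.Adj α β) {d : V →₀ ℕ}
    (hG : ∀ C : Finset V, G.IsVertexCover C → r + s ≤ ∑ x ∈ C, d x)
    (hH : ∀ C : Finset V, (G.deleteEdges {s(α, β)}).IsVertexCover C → s ≤ ∑ x ∈ C, d x) :
    ∃ M : Multiset (V × V), r + s ≤ M.card ∧ (∀ p ∈ M, G.Adj p.1 p.2 ∧ c p.1 = c α) ∧
      degVec M ≤ d ∧ M.count (α, β) ≤ r := by
  classical
  obtain ⟨m, hm_card, hm_mem, hfst, hsnd⟩ := exists_matching_of_card_add_le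
    (slots (univ.filter (c · = c α)) d) (fun q => slots (cappedNbrs G α β r q) d) (r + s)
    fun S hS => card_add_le_card_biUnion_cappedNbrs hc hαβ hG hH hS
  have hm : ∀ p ∈ m, c p.1.1 = c α ∧ G.Adj p.1.1 p.2.1 ∧ (p.1.1 = α → p.2.1 = β → p.1.2 < r) ∧
      p.1.2 < d p.1.1 ∧ p.2.2 < d p.2.1 := by
    intro p hp
    obtain ⟨h₁, h₂⟩ := hm_mem p hp
    simp only [mem_slots, cappedNbrs, mem_filter, mem_univ, true_and] at h₁ h₂
    exact ⟨h₁.1, h₂.1.1, h₂.1.2, h₁.2, h₂.2⟩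
  refine ⟨m.val.map fun p => (p.1.1, p.2.1), by simpa using hm_card, ?_,
    degVec_map_le_of_injOn hfst hsnd fun p hp => ⟨(hm p hp).2.2.2.1, (hm p hp).2.2.2.2,
      (hm p hp).1, fun h => hc _ _ (hm p hp).2.1 ((hm p hp).1.trans h.symm)⟩, ?_⟩
  · simp only [Multiset.mem_map, mem_val]
    rintro _ ⟨p, hp, rfl⟩
    exact ⟨(hm p hp).2.1, (hm p hp).1⟩
  · rw [Multiset.count_eq_card_filter_eq, Multiset.filter_map, Multiset.card_map, ← filter_val,
      card_val]
    refine card_le_of_injOn_slots (x := α) (d := fun _ => r)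
      (hfst.mono (coe_subset.2 (filter_subset _ _))) fun p hp => ?_
    obtain ⟨hp, hpe⟩ := mem_filter.1 hp
    simp only [Function.comp_apply, Prod.ext_iff] at hpe
    exact mem_slots.2 ⟨mem_singleton.2 hpe.1.symm, (hm p hp).2.2.1 hpe.1.symm hpe.2.symm⟩

theorem exists_degVec_add_le_of_cover_bounds (hc : ∀ a b, G.Adj a b → c a ≠ c b)
    (hαβ : G.Adj α β) {d : V →₀ ℕ}
    (hG : ∀ C : Finset V, G.IsVertexCover C → r + s ≤ ∑ x ∈ C, d x)
    (hH : ∀ C : Finset V, (G.deleteEdges {s(α, β)}).IsVertexCover C → s ≤ ∑ x ∈ C, d x) :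
    ∃ M₁ M₂ : Multiset (V × V), M₁.card = r ∧ M₂.card = s ∧ (∀ p ∈ M₁, G.Adj p.1 p.2) ∧
      (∀ p ∈ M₂, (G.deleteEdges {s(α, β)}).Adj p.1 p.2) ∧ degVec (M₁ + M₂) ≤ d := by
  obtain ⟨M₀, hM₀card, hM₀, hdeg, hcount⟩ := exists_multiset_of_cover_bounds hc hαβ hG hH
  obtain ⟨M, hMM₀, hMcard⟩ := Multiset.exists_le_card_eq hM₀card
  have hM : ∀ p ∈ M, G.Adj p.1 p.2 ∧ c p.1 = c α := fun p hp => hM₀ p (Multiset.mem_of_le hMM₀ hp)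
  obtain ⟨M₁, M₂, rfl, hM₁, hM₂, hM₂e⟩ := Multiset.exists_add_eq_of_card_filter_not_le
    (P := (· ≠ (α, β))) hMcard (by
      simpa [Multiset.count_eq_card_filter_eq, eq_comm] using
        (Multiset.count_le_of_le (α, β) hMM₀).trans hcount)
  refine ⟨M₁, M₂, hM₁, hM₂, fun p hp => (hM p (Multiset.mem_add.2 (Or.inl hp))).1,
    fun p hp => ?_, (degVec_mono hMM₀).trans hdeg⟩
  obtain ⟨hpG, hpc⟩ := hM p (Multiset.mem_add.2 (Or.inr hp))
  refine SimpleGraph.deleteEdges_adj.2 ⟨hpG, fun h => ?_⟩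
  rcases Sym2.eq_iff.1 h with ⟨h₁, h₂⟩ | ⟨h₁, -⟩
  · exact hM₂e p hp (Prod.ext h₁ h₂)
  · exact hc α β hαβ (h₁ ▸ hpc).symm

end CappedMatching

section MonomialIdeal

variable {σ R : Type*} [CommSemiring R]

variable (R) in
noncomputable def monomialIdeal (S : Set (σ →₀ ℕ)) : Ideal (MvPolynomial σ R) :=
  Ideal.span ((fun d => monomial d (1 : R)) '' S)

open Pointwise in
theorem monomialIdeal_mul (S T : Set (σ →₀ ℕ)) :
    monomialIdeal R S * monomialIdeal R T = monomialIdeal R (S + T) := by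
  rw [monomialIdeal, monomialIdeal, Ideal.span_mul_span']
  congr 1
  ext q
  simp only [Set.mem_mul, Set.mem_image, Set.mem_add]
  constructor
  · rintro ⟨-, ⟨a, ha, rfl⟩, -, ⟨b, hb, rfl⟩, rfl⟩
    exact ⟨a + b, ⟨a, ha, b, hb, rfl⟩, by simp [monomial_mul]⟩
  · rintro ⟨-, ⟨a, ha, b, hb, rfl⟩, rfl⟩
    exact ⟨_, ⟨a, ha, rfl⟩, _, ⟨b, hb, rfl⟩, by simp [monomial_mul]⟩

theorem monomialIdeal_zero : monomialIdeal R ({0} : Set (σ →₀ ℕ)) = ⊤ := by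
  simp [monomialIdeal]

theorem inf_le_monomialIdeal {S T U : Set (σ →₀ ℕ)}
    (h : ∀ d, (∃ a ∈ S, a ≤ d) → (∃ b ∈ T, b ≤ d) → ∃ e ∈ U, e ≤ d) :
    monomialIdeal R S ⊓ monomialIdeal R T ≤ monomialIdeal R U := by
  rintro f ⟨hS, hT⟩
  simp only [monomialIdeal, SetLike.mem_coe, mem_ideal_span_monomial_image] at hS hT ⊢
  exact fun d hd => h d (hS d hd) (hT d hd)

end MonomialIdeal

section Powers

variable {V R : Type*} [CommSemiring R] {G G' : SimpleGraph V}

variable (R) in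
noncomputable def edgeIdeal (G : SimpleGraph V) : Ideal (MvPolynomial V R) :=
  Ideal.span {m | ∃ a b, G.Adj a b ∧ m = X a * X b}

theorem edgeIdeal_mono (h : G ≤ G') : edgeIdeal R G ≤ edgeIdeal R G' :=
  Ideal.span_mono fun _ ⟨a, b, hab, hm⟩ => ⟨a, b, h hab, hm⟩

variable (G) in
/-- Exponent vectors of the products of `k` edge monomials of `G`. -/
def degVecs (k : ℕ) : Set (V →₀ ℕ) :=
  {d | ∃ M : Multiset (V × V), M.card = k ∧ (∀ p ∈ M, G.Adj p.1 p.2) ∧ degVec M = d}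

theorem degVecs_zero : degVecs G 0 = {0} := by
  ext d
  simp [degVecs, eq_comm]

open Pointwise in
theorem degVecs_add (k l : ℕ) : degVecs G k + degVecs G l = degVecs G (k + l) := by
  ext d
  constructor
  · rintro ⟨-, ⟨M, hM, hMG, rfl⟩, -, ⟨N, hN, hNG, rfl⟩, rfl⟩
    refine ⟨M + N, by simp [hM, hN], fun p hp => ?_, degVec_add M N⟩
    rcases Multiset.mem_add.1 hp with hp | hp
    exacts [hMG p hp, hNG p hp]
  · rintro ⟨M, hM, hMG, rfl⟩
    classical
    obtain ⟨N, hNM, hN⟩ := Multiset.exists_le_card_eq (M := M) (k := k) (by omega)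
    have hsplit := tsub_add_cancel_of_le hNM
    refine ⟨degVec N, ⟨N, hN, fun p hp => hMG p (Multiset.mem_of_le hNM hp), rfl⟩,
      degVec (M - N), ⟨M - N, ?_, fun p hp => hMG p (Multiset.mem_of_le tsub_le_self hp), rfl⟩,
      by simp only [← degVec_add, add_comm N, hsplit]⟩
    have := congrArg Multiset.card hsplit
    rw [Multiset.card_add] at this
    omega

theorem edgeIdeal_eq_monomialIdeal : edgeIdeal R G = monomialIdeal R (degVecs G 1) := by
  rw [edgeIdeal, monomialIdeal]
  congr 1
  ext m
  constructor
  · rintro ⟨a, b, hab, rfl⟩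
    exact ⟨_, ⟨{(a, b)}, rfl, by simpa using hab, rfl⟩, by simp [degVec, X, monomial_mul]⟩
  · rintro ⟨-, ⟨M, hM, hMG, rfl⟩, rfl⟩
    obtain ⟨p, rfl⟩ := Multiset.card_eq_one.1 hM
    exact ⟨p.1, p.2, hMG p (Multiset.mem_singleton_self p), by simp [degVec, X, monomial_mul]⟩

theorem edgeIdeal_pow (k : ℕ) : edgeIdeal R G ^ k = monomialIdeal R (degVecs G k) := by
  induction k with
  | zero => rw [pow_zero, degVecs_zero, monomialIdeal_zero, Ideal.one_eq_top]
  | succ k ih => rw [pow_succ, ih, edgeIdeal_eq_monomialIdeal, monomialIdeal_mul, degVecs_add]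

open Pointwise in
theorem exists_mem_degVecs_add_le [Fintype V] [DecidableEq V] {c : V → Bool}
    (hc : ∀ a b, G.Adj a b → c a ≠ c b) {α β : V} (hαβ : G.Adj α β) {r s : ℕ} {a b d : V →₀ ℕ}
    (ha : a ∈ degVecs G (r + s)) (had : a ≤ d)
    (hb : b ∈ degVecs (G.deleteEdges {s(α, β)}) s) (hbd : b ≤ d) :
    ∃ e ∈ degVecs G r + degVecs (G.deleteEdges {s(α, β)}) s, e ≤ d := by
  classical
  obtain ⟨MA, hMAc, hMA, rfl⟩ := ha
  obtain ⟨MB, hMBc, hMB, rfl⟩ := hb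
  obtain ⟨M₁, M₂, h₁, h₂, h₁G, h₂H, hle⟩ := exists_degVec_add_le_of_cover_bounds hc hαβ
    (fun C hC => hMAc ▸ card_le_sum_of_isVertexCover hC hMA had)
    (fun C hC => hMBc ▸ card_le_sum_of_isVertexCover hC hMB hbd)
  exact ⟨_, ⟨_, ⟨M₁, h₁, h₁G, rfl⟩, _, ⟨M₂, h₂, h₂H, rfl⟩, (degVec_add M₁ M₂).symm⟩, hle⟩

theorem edgeIdeal_pow_mul_pow_deleteEdges [Fintype V] [DecidableEq V] {c : V → Bool}
    (hc : ∀ a b, G.Adj a b → c a ≠ c b) {α β : V} (hαβ : G.Adj α β) (r s : ℕ) :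
    edgeIdeal R G ^ r * edgeIdeal R (G.deleteEdges {s(α, β)}) ^ s =
      edgeIdeal R G ^ (r + s) ⊓ edgeIdeal R (G.deleteEdges {s(α, β)}) ^ s := by
  refine le_antisymm (le_inf ?_ Ideal.mul_le_right) ?_
  · calc _ ≤ edgeIdeal R G ^ r * edgeIdeal R G ^ s :=
          Ideal.mul_mono_right (Ideal.pow_right_mono (edgeIdeal_mono (G.deleteEdges_le _)) s)
      _ = _ := (pow_add _ r s).symm
  · simp only [edgeIdeal_pow, monomialIdeal_mul]
    exact inf_le_monomialIdeal fun d ⟨a, ha, had⟩ ⟨b, hb, hbd⟩ =>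
      exists_mem_degVecs_add_le hc hαβ ha had hb hbd

end Powers

end EdgeIdeal

/-- For a bipartite graph `G` with edge ideal `I` and `J` the edge ideal
of `G` minus the edge `{α, β}`, one has `I^r J^s = I^{r+s} ∩ J^s` for all `r, s ≥ 0`. -/
theorem stmt17 {n : ℕ} {K : Type*} [Field K]
    (G : SimpleGraph (Fin n))
    (hbip : ∃ c : Fin n → Bool, ∀ a b, G.Adj a b → c a ≠ c b)
    (α β : Fin n) (hadj : G.Adj α β)
    (I J : Ideal (MvPolynomial (Fin n) K))
    (hI : I = Ideal.span {m : MvPolynomial (Fin n) K |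
      ∃ a b, G.Adj a b ∧ m = X a * X b})
    (hJ : J = Ideal.span {m : MvPolynomial (Fin n) K |
      ∃ a b, G.Adj a b ∧ ¬((a = α ∧ b = β) ∨ (a = β ∧ b = α)) ∧ m = X a * X b})
    (r s : ℕ) :
    I ^ r * J ^ s = I ^ (r + s) ⊓ J ^ s := by
  obtain ⟨c, hc⟩ := hbip
  have hJ' : J = EdgeIdeal.edgeIdeal K (G.deleteEdges {s(α, β)}) := by
    simp only [hJ, EdgeIdeal.edgeIdeal, SimpleGraph.deleteEdges_adj, Set.mem_singleton_iff,
      Sym2.eq_iff, and_assoc]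
  rw [hI, hJ']
  exact EdgeIdeal.edgeIdeal_pow_mul_pow_deleteEdges hc hadj r s
end

section
/- Let $\mathcal{C}$ be a clutter on vertex set $\{x_1,x_2,x_3,x_4,x_5\}$ such that every edge has cardinality 3 and every pair of distinct vertices is contained in at least two different edges. Then the edge ideal $I(\mathcal{C})$ is polymatroidal, i.e., for all minimal generators $u, v$ of $I(\mathcal{C})$ and every variable $x_i$ with $\deg_{x_i}(u) > \deg_{x_i}(v)$, there is a variable $x_j$ with $\deg_{x_j}(u) < \deg_{x_j}(v)$ and $x_j u / x_i$ again a minimal generator. -/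
/-- Let `𝒞` be a clutter on 5 vertices all of whose edges have
cardinality 3, such that every pair of distinct vertices lies in at least two different
edges. Then the edge ideal is polymatroidal, i.e. the exchange condition holds: for
edges `e, f` and `i ∈ e \ f` there is `j ∈ f \ e` with `(e \ {i}) ∪ {j}` again an edge
(equivalently, `x_j u / x_i` is again a minimal generator). -/
theorem stmt19 (E : Finset (Finset (Fin 5)))
    (hclutter : ∀ e ∈ E, ∀ f ∈ E, e ⊆ f → e = f)
    (hcard : ∀ e ∈ E, e.card = 3)
    (hpairs : ∀ i j : Fin 5, i ≠ j →
      ∃ e₁ ∈ E, ∃ e₂ ∈ E, e₁ ≠ e₂ ∧ i ∈ e₁ ∧ j ∈ e₁ ∧ i ∈ e₂ ∧ j ∈ e₂) :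
    ∀ e ∈ E, ∀ f ∈ E, ∀ i : Fin 5, i ∈ e → i ∉ f →
      ∃ j : Fin 5, j ∈ f ∧ j ∉ e ∧ insert j (e.erase i) ∈ E := by
  intro e he f hf i hie hif
  have hce : e.card = 3 := hcard e he
  have hcf : f.card = 3 := hcard f hf
  have hcer : (e.erase i).card = 2 := by
    rw [Finset.card_erase_of_mem hie, hce]
  by_cases hsub : e.erase i ⊆ f
  · -- f = insert j (e.erase i)
    have hnsub : ¬ f ⊆ e.erase i := by
      intro h
      have := Finset.card_le_card h
      omega
    obtain ⟨j, hjf, hjne⟩ := Finset.not_subset.mp hnsub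
    have hji : j ≠ i := fun h => hif (h ▸ hjf)
    refine ⟨j, hjf, ?_, ?_⟩
    · intro hje
      exact hjne (Finset.mem_erase.mpr ⟨hji, hje⟩)
    · have h1 : insert j (e.erase i) ⊆ f := Finset.insert_subset hjf hsub
      have h2 : (insert j (e.erase i)).card = 3 := by
        rw [Finset.card_insert_of_notMem hjne, hcer]
      have : insert j (e.erase i) = f :=
        Finset.eq_of_subset_of_card_le h1 (by omega)
      rw [this]; exact hf
  · obtain ⟨x, hxe, hxf⟩ := Finset.not_subset.mp hsub
    obtain ⟨a, b, hab, hab2⟩ := Finset.card_eq_two.mp hcer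
    obtain ⟨e₁, he₁, e₂, he₂, hne, ha1, hb1, ha2, hb2⟩ := hpairs a b hab
    -- pick g ∈ E, g ≠ e, with e.erase i ⊆ g
    obtain ⟨g, hg, hge, hag, hbg⟩ : ∃ g ∈ E, g ≠ e ∧ a ∈ g ∧ b ∈ g := by
      by_cases h1 : e₁ = e
      · exact ⟨e₂, he₂, fun h => hne (h1.trans h.symm), ha2, hb2⟩
      · exact ⟨e₁, he₁, h1, ha1, hb1⟩
    have hsubg : e.erase i ⊆ g := by
      rw [hab2]; exact Finset.insert_subset hag (Finset.singleton_subset_iff.mpr hbg)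
    have hcg : g.card = 3 := hcard g hg
    have hnsubg : ¬ g ⊆ e.erase i := by
      intro h
      have := Finset.card_le_card h
      omega
    obtain ⟨k, hkg, hkne⟩ := Finset.not_subset.mp hnsubg
    have hgeq : insert k (e.erase i) = g := by
      refine Finset.eq_of_subset_of_card_le (Finset.insert_subset hkg hsubg) ?_
      rw [Finset.card_insert_of_notMem hkne, hcer]
      omega
    have hki : k ≠ i := by
      intro h
      apply hge
      rw [← hgeq, h, Finset.insert_erase hie]
    have hke : k ∉ e := by
      intro h
      exact hkne (Finset.mem_erase.mpr ⟨hki, h⟩)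
    have hkf : k ∈ f := by
      by_contra hkf
      -- f avoids i, x, k which are distinct
      have hxi : x ≠ i := (Finset.mem_erase.mp hxe).1
      have hkx : k ≠ x := fun h => hkne (h ▸ hxe)
      have hsub3 : ({i, x, k} : Finset (Fin 5)) ⊆ Finset.univ \ f := by
        intro y hy
        simp only [Finset.mem_insert, Finset.mem_singleton] at hy
        rcases hy with rfl | rfl | rfl <;>
          simp [Finset.mem_sdiff, hif, hxf, hkf]
      have hc3 : ({i, x, k} : Finset (Fin 5)).card = 3 := by
        rw [Finset.card_insert_of_notMem (by simp [hxi.symm, hki.symm] : i ∉ ({x, k} : Finset (Fin 5))),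
            Finset.card_insert_of_notMem (by simp [hkx.symm] : x ∉ ({k} : Finset (Fin 5))),
            Finset.card_singleton]
      have := Finset.card_le_card hsub3
      rw [Finset.card_sdiff_of_subset (Finset.subset_univ f), hc3] at this
      simp [hcf] at this
    exact ⟨k, hkf, hke, hgeq ▸ hg⟩
end
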